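/- arXiv:math/0408011 — 5 statements merged into one kernel-verified Lean document; each statement's English description precedes it below -/
import Mathlib

section
/- Let s be an intermediate external address of length n ≥ 2 with kneading sequence K(s) = u_1 … u_{n-1} *, let s* ∈ ℤ, and let p/q ∈ (0,1) be a rational number in lowest terms. Then there exists a unique intermediate external address s′ of length qn such that itin_s(s′) = u_1 … u_{n-1} m_1 u_1 … u_{n-1} m_2 ⋯ u_1 … u_{n-1} m_q, where m_q = *, m_{q-1} is the boundary symbol [s*/(s*-1)], and, for 1 ≤ j ≤ q-2, m_j = s* if jp mod q > q - p and m_j = s* - 1 otherwise. -/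
noncomputable section

/-- Entries of an address: a real number or `∞`. -/
abbrev Entry : Type := WithTop ℝ

/-- An address is a sequence of entries. -/
abbrev Addr : Type := ℕ → Entry

/-- The address `∞` (all of whose entries are infinite). -/
def topAddr : Addr := fun _ => ⊤

/-- The shift map `σ`, deleting the first entry. -/
def shift (a : Addr) : Addr := fun k => a (k + 1)

/-- The iterated shift `σ^k`. -/
def shiftIter (a : Addr) (k : ℕ) : Addr := fun j => a (j + k)

/-- `σ^k(a)` is defined (all earlier iterates differ from `∞`). -/
def shiftDef (a : Addr) (k : ℕ) : Prop := ∀ j, j < k → shiftIter a j ≠ topAddr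

/-- Prepending an entry to an address. -/
def consAddr (x : Entry) (a : Addr) : Addr := fun k => if k = 0 then x else a (k - 1)

/-- The lexicographic (strict) order on addresses. -/
def addrLt (a b : Addr) : Prop := ∃ k, (∀ j, j < k → a j = b j) ∧ a k < b k

/-- The lexicographic order on addresses. -/
def addrLe (a b : Addr) : Prop := addrLt a b ∨ a = b

/-- Infinite external addresses: all entries are integers. -/
def IsExtAddr (a : Addr) : Prop := ∀ k, ∃ m : ℤ, a k = ((m : ℝ) : Entry)

/-- Intermediate external addresses of length `n ≥ 1`: the first `n - 2` entries are
integers, the `(n-1)`-st entry lies in `ℤ + 1/2`, and all further entries are `∞`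
(for `n = 1` this is the address `∞` itself). -/
def IsIntermediate (a : Addr) (n : ℕ) : Prop :=
  1 ≤ n ∧ (∀ k, k + 2 < n → ∃ m : ℤ, a k = ((m : ℝ) : Entry)) ∧
    (∀ k, k + 2 = n → ∃ m : ℤ, a k = (((m : ℝ) + 1 / 2 : ℝ) : Entry)) ∧
    (∀ k, n ≤ k + 1 → a k = ⊤)

/-- Membership in `Ṡ`: infinite external addresses and intermediate ones of length `≥ 2`. -/
def InSDot (a : Addr) : Prop := IsExtAddr a ∨ ∃ n, 2 ≤ n ∧ IsIntermediate a n

/-- Membership in `S̄ = Ṡ ∪ {∞}`. -/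
def InSBar (a : Addr) : Prop := InSDot a ∨ a = topAddr

/-- `a` is periodic of (exact) period `n`. -/
def PeriodicAddr (a : Addr) (n : ℕ) : Prop :=
  1 ≤ n ∧ shiftIter a n = a ∧ ∀ m, 1 ≤ m → m < n → shiftIter a m ≠ a

/-- Itinerary entries: integers `j`, boundary symbols `[j/(j-1)]` (encoded `bdy j`),
or the symbol `*`. -/
inductive ItinEntry : Type
  | int : ℤ → ItinEntry
  | bdy : ℤ → ItinEntry
  | star : ItinEntry
  deriving DecidableEq

open scoped Classical in
/-- The itinerary `itin_s(r)`; position `k` holds the entry `u_{k+1}` of the paper: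
`u_{k+1} = j` if `js < σ^k(r) < (j+1)s`, the boundary symbol `[j/(j-1)]` if `σ^k(r) = js`,
and `*` if `σ^k(r) = ∞`. -/
def itin (s r : Addr) : ℕ → ItinEntry := fun k =>
  if shiftIter r k = topAddr then ItinEntry.star
  else if h : ∃ j : ℤ, shiftIter r k = consAddr ((j : ℝ) : Entry) s then ItinEntry.bdy h.choose
  else if h : ∃ j : ℤ, addrLt (consAddr ((j : ℝ) : Entry) s) (shiftIter r k) ∧
      addrLt (shiftIter r k) (consAddr (((j + 1 : ℤ) : ℝ) : Entry) s) then ItinEntry.int h.choose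
  else ItinEntry.star

/-- Replace each boundary symbol `[j/(j-1)]` by `j`. -/
def entryPlus : ItinEntry → ItinEntry
  | ItinEntry.bdy j => ItinEntry.int j
  | e => e

/-- Replace each boundary symbol `[j/(j-1)]` by `j - 1`. -/
def entryMinus : ItinEntry → ItinEntry
  | ItinEntry.bdy j => ItinEntry.int (j - 1)
  | e => e

/-- The itinerary `itin⁺_s(r)`. -/
def itinPlus (s r : Addr) : ℕ → ItinEntry := fun k => entryPlus (itin s r k)

/-- The itinerary `itin⁻_s(r)`. -/
def itinMinus (s r : Addr) : ℕ → ItinEntry := fun k => entryMinus (itin s r k)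

/-- The periodic itinerary `(u_1 … u_n)^∞` (with `u_i` encoded as `u (i - 1)`). -/
def perItin (u : ℕ → ℤ) (n : ℕ) : ℕ → ItinEntry := fun k => ItinEntry.int (u (k % n))

/-- The finite itinerary word `u_1 … u_{n-1} *` (star from position `n - 1` onwards). -/
def finWord (u : ℕ → ℤ) (n : ℕ) : ℕ → ItinEntry := fun k =>
  if k + 1 < n then ItinEntry.int (u k) else ItinEntry.star

/-- A combinatorial characteristic ray pair of period `n` with itinerary `(u_1 … u_n)^∞`. -/
def CharRayPair (rm rp : Addr) (n : ℕ) (u : ℕ → ℤ) : Prop :=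
  IsExtAddr rm ∧ IsExtAddr rp ∧ PeriodicAddr rm n ∧ PeriodicAddr rp n ∧ addrLt rm rp ∧
    (∀ k, 1 ≤ k → ¬(addrLt rm (shiftIter rm k) ∧ addrLt (shiftIter rm k) rp)) ∧
    (∀ k, 1 ≤ k → ¬(addrLt rm (shiftIter rp k) ∧ addrLt (shiftIter rp k) rp)) ∧
    itinMinus rm rm = perItin u n ∧ itinMinus rm rp = perItin u n ∧
    addrLt (shiftIter rp (n - 1)) (shiftIter rm (n - 1))

/-- The itinerary `u_1 … u_{n-1} m_1 u_1 … u_{n-1} m_2 ⋯ u_1 … u_{n-1} m_q` of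
Lemma "Itineraries of Bifurcation Addresses": `m_q = *`, `m_{q-1} = [s*/(s*-1)]`, and
for `1 ≤ j ≤ q - 2` one has `m_j = s*` if `jp mod q > q - p` and `m_j = s* - 1` otherwise. -/
def bifItin (u : ℕ → ℤ) (n : ℕ) (sstar : ℤ) (p q : ℕ) : ℕ → ItinEntry := fun i =>
  if q * n ≤ i + 1 then ItinEntry.star
  else if i % n + 1 < n then ItinEntry.int (u (i % n))
  else if i / n + 2 = q then ItinEntry.bdy sstar
  else if q - p < (i / n + 1) * p % q then ItinEntry.int sstar
  else ItinEntry.int (sstar - 1)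

/-! ### Auxiliary material for the proof of Statement 8 -/

/-- Integer entries. -/
abbrev C (j : ℤ) : Entry := ((j : ℝ) : Entry)

lemma C_ne_top (j : ℤ) : C j ≠ ⊤ := WithTop.coe_ne_top

lemma C_lt_C {j j' : ℤ} : C j < C j' ↔ j < j' := by
  simp [C, WithTop.coe_lt_coe]

lemma C_inj {j j' : ℤ} (h : C j = C j') : j = j' := by
  have := WithTop.coe_injective h
  exact_mod_cast this

@[simp] lemma consAddr_zero (x : Entry) (a : Addr) : consAddr x a 0 = x := rfl

@[simp] lemma consAddr_succ (x : Entry) (a : Addr) (k : ℕ) :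
    consAddr x a (k + 1) = a k := rfl

lemma consAddr_inj {x y : Entry} {a b : Addr} (h : consAddr x a = consAddr y b) :
    x = y ∧ a = b := by
  constructor
  · have := congrFun h 0; simpa using this
  · funext k; have := congrFun h (k + 1); simpa using this

lemma shift_consAddr (x : Entry) (a : Addr) : shift (consAddr x a) = a := by
  funext k; rfl

@[simp] lemma shiftIter_zero (a : Addr) : shiftIter a 0 = a := by
  funext k; simp [shiftIter]

lemma shiftIter_add (a : Addr) (k m : ℕ) :
    shiftIter (shiftIter a k) m = shiftIter a (m + k) := by
  funext j; simp [shiftIter]; ring_nf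

lemma shiftIter_succ (a : Addr) (k : ℕ) :
    shiftIter a (k + 1) = shift (shiftIter a k) := by
  funext j; simp [shiftIter, shift]; ring_nf

lemma shiftIter_eq_cons (a : Addr) (k : ℕ) :
    shiftIter a k = consAddr (a k) (shiftIter a (k + 1)) := by
  funext j
  cases j with
  | zero => simp [shiftIter]
  | succ j => simp [shiftIter]; ring_nf

lemma consAddr_ne_top (j : ℤ) (a : Addr) : consAddr (C j) a ≠ topAddr := by
  intro h
  have := congrFun h 0
  exact C_ne_top j (by simpa [topAddr] using this)

/-! ### Order lemmas -/

lemma addrLt_irrefl (a : Addr) : ¬ addrLt a a := by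
  rintro ⟨k, -, hk⟩; exact lt_irrefl _ hk

lemma addrLt_trans {a b c : Addr} (h1 : addrLt a b) (h2 : addrLt b c) : addrLt a c := by
  obtain ⟨k1, he1, hl1⟩ := h1
  obtain ⟨k2, he2, hl2⟩ := h2
  rcases lt_trichotomy k1 k2 with h | h | h
  · exact ⟨k1, fun j hj => (he1 j hj).trans (he2 j (hj.trans h)), hl1.trans_le (le_of_eq (he2 k1 h))⟩
  · subst h; exact ⟨k1, fun j hj => (he1 j hj).trans (he2 j hj), hl1.trans hl2⟩
  · exact ⟨k2, fun j hj => (he1 j (hj.trans h)).trans (he2 j hj),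
      (he1 k2 h) ▸ hl2⟩

lemma addrLt_asymm {a b : Addr} (h1 : addrLt a b) : ¬ addrLt b a :=
  fun h2 => addrLt_irrefl a (addrLt_trans h1 h2)

open Classical in
lemma addrLt_total {a b : Addr} (h : a ≠ b) : addrLt a b ∨ addrLt b a := by
  have hne : ∃ k, a k ≠ b k := by
    by_contra hc
    push_neg at hc
    exact h (funext hc)
  classical
  let k := Nat.find hne
  have hk : a k ≠ b k := Nat.find_spec hne
  have hj : ∀ j, j < k → a j = b j := fun j hj => by
    by_contra hc
    exact absurd (Nat.find_le hc) (not_le.mpr hj)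
  rcases lt_or_gt_of_ne hk with hlt | hgt
  · exact Or.inl ⟨k, hj, hlt⟩
  · exact Or.inr ⟨k, fun j h' => (hj j h').symm, hgt⟩

lemma ne_top_of_addrLt {a b : Addr} (h : addrLt a b) : a ≠ topAddr := by
  rintro rfl
  obtain ⟨k, -, hk⟩ := h
  exact not_top_lt hk

lemma consAddr_lt_consAddr {x y : Entry} {a b : Addr} :
    addrLt (consAddr x a) (consAddr y b) ↔ x < y ∨ (x = y ∧ addrLt a b) := by
  constructor
  · rintro ⟨k, he, hl⟩
    cases k with
    | zero => exact Or.inl (by simpa using hl)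
    | succ k =>
      refine Or.inr ⟨by simpa using he 0 (Nat.succ_pos k), ⟨k, fun j hj => ?_, by simpa using hl⟩⟩
      have := he (j + 1) (by omega)
      simpa using this
  · rintro (h | ⟨rfl, k, he, hl⟩)
    · exact ⟨0, by omega, by simpa using h⟩
    · refine ⟨k + 1, fun j hj => ?_, by simpa using hl⟩
      cases j with
      | zero => rfl
      | succ j => simpa using he j (by omega)

/-- Uniqueness of the integer `j` with `js < x < (j+1)s`. -/
lemma sandwich_unique {s x : Addr} {j j' : ℤ}
    (h1 : addrLt (consAddr (C j) s) x) (h2 : addrLt x (consAddr (C (j + 1)) s))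
    (h1' : addrLt (consAddr (C j') s) x) (h2' : addrLt x (consAddr (C (j' + 1)) s)) :
    j = j' := by
  by_contra hne
  have key : ∀ i i' : ℤ, i < i' →
      addrLt x (consAddr (C (i + 1)) s) → addrLt (consAddr (C i') s) x → False := by
    intro i i' hii h2i h1i
    have hle : addrLe (consAddr (C (i + 1)) s) (consAddr (C i') s) := by
      rcases lt_or_eq_of_le (by omega : i + 1 ≤ i') with h | h
      · exact Or.inl (consAddr_lt_consAddr.mpr (Or.inl (C_lt_C.mpr h)))
      · exact Or.inr (by rw [h])
    rcases hle with h | h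
    · exact addrLt_irrefl x (addrLt_trans (addrLt_trans h2i h) h1i)
    · rw [h] at h2i
      exact addrLt_irrefl x (addrLt_trans h2i h1i)
  rcases lt_or_gt_of_ne hne with h | h
  · exact key j j' h h2 h1'
  · exact key j' j h h2' h1

/-! ### Computation rules for `itin` -/

open scoped Classical in
/-- `itin s r k` as a function of `σ^k(r)`. -/
def itinAux (s x : Addr) : ItinEntry :=
  if x = topAddr then ItinEntry.star
  else if h : ∃ j : ℤ, x = consAddr ((j : ℝ) : Entry) s then ItinEntry.bdy h.choose
  else if h : ∃ j : ℤ, addrLt (consAddr ((j : ℝ) : Entry) s) x ∧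
      addrLt x (consAddr (((j + 1 : ℤ) : ℝ) : Entry) s) then ItinEntry.int h.choose
  else ItinEntry.star

lemma itin_eq_aux (s r : Addr) (k : ℕ) : itin s r k = itinAux s (shiftIter r k) := rfl

lemma itin_congr {s r r' : Addr} {k k' : ℕ} (h : shiftIter r k = shiftIter r' k') :
    itin s r k = itin s r' k' := by
  rw [itin_eq_aux, itin_eq_aux, h]

lemma itin_spec_star {s r : Addr} {k : ℕ} (h : shiftIter r k = topAddr) :
    itin s r k = ItinEntry.star := by
  simp only [itin, if_pos h]

lemma itin_spec_bdy {s r : Addr} {k : ℕ} {j : ℤ}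
    (h : shiftIter r k = consAddr (C j) s) :
    itin s r k = ItinEntry.bdy j := by
  have hnt : shiftIter r k ≠ topAddr := h ▸ consAddr_ne_top j s
  have hex : ∃ j' : ℤ, shiftIter r k = consAddr ((j' : ℝ) : Entry) s := ⟨j, h⟩
  simp only [itin, if_neg hnt, dif_pos hex]
  congr 1
  exact (C_inj (consAddr_inj (h.symm.trans hex.choose_spec)).1).symm

lemma itin_spec_int {s r : Addr} {k : ℕ} {j : ℤ}
    (hne : ∀ j' : ℤ, shiftIter r k ≠ consAddr (C j') s)
    (h1 : addrLt (consAddr (C j) s) (shiftIter r k))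
    (h2 : addrLt (shiftIter r k) (consAddr (C (j + 1)) s)) :
    itin s r k = ItinEntry.int j := by
  have hnt : shiftIter r k ≠ topAddr := by
    intro h
    rw [h] at h2
    exact ne_top_of_addrLt h2 rfl
  have hnex : ¬ ∃ j' : ℤ, shiftIter r k = consAddr ((j' : ℝ) : Entry) s := by
    rintro ⟨j', hj'⟩; exact hne j' hj'
  have hex : ∃ j' : ℤ, addrLt (consAddr ((j' : ℝ) : Entry) s) (shiftIter r k) ∧
      addrLt (shiftIter r k) (consAddr (((j' + 1 : ℤ) : ℝ) : Entry) s) := ⟨j, h1, h2⟩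
  simp only [itin, if_neg hnt, dif_neg hnex, dif_pos hex]
  congr 1
  obtain ⟨hc1, hc2⟩ := hex.choose_spec
  exact sandwich_unique hc1 hc2 h1 h2

lemma itin_eq_bdy {s r : Addr} {k : ℕ} {j : ℤ} (h : itin s r k = ItinEntry.bdy j) :
    shiftIter r k = consAddr (C j) s := by
  by_cases hnt : shiftIter r k = topAddr
  · rw [itin_spec_star hnt] at h; exact absurd h (by simp)
  by_cases hex : ∃ j' : ℤ, shiftIter r k = consAddr ((j' : ℝ) : Entry) s
  · obtain ⟨j', hj'⟩ := hex
    rw [itin_spec_bdy hj'] at h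
    cases h
    exact hj'
  · simp only [itin, if_neg hnt, dif_neg hex] at h
    split at h <;> exact absurd h (by simp)

lemma itin_eq_int {s r : Addr} {k : ℕ} {j : ℤ} (h : itin s r k = ItinEntry.int j) :
    addrLt (consAddr (C j) s) (shiftIter r k) ∧
      addrLt (shiftIter r k) (consAddr (C (j + 1)) s) := by
  by_cases hnt : shiftIter r k = topAddr
  · rw [itin_spec_star hnt] at h; exact absurd h (by simp)
  by_cases hex : ∃ j' : ℤ, shiftIter r k = consAddr ((j' : ℝ) : Entry) s
  · obtain ⟨j', hj'⟩ := hex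
    rw [itin_spec_bdy hj'] at h
    exact absurd h (by simp)
  by_cases hex2 : ∃ j' : ℤ, addrLt (consAddr ((j' : ℝ) : Entry) s) (shiftIter r k) ∧
      addrLt (shiftIter r k) (consAddr (((j' + 1 : ℤ) : ℝ) : Entry) s)
  · obtain ⟨j', h1, h2⟩ := hex2
    rw [itin_spec_int (fun j'' hj'' => hex ⟨j'', hj''⟩) h1 h2] at h
    cases h
    exact ⟨h1, h2⟩
  · simp only [itin, if_neg hnt, dif_neg hex, dif_neg hex2] at h
    exact absurd h (by simp)

/-! ### The construction -/

/-- Target integer entries for the bifurcation itinerary. -/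
def tgt (u : ℕ → ℤ) (n : ℕ) (sstar : ℤ) (p q i : ℕ) : ℤ :=
  if i % n + 1 < n then u (i % n)
  else if q - p < (i / n + 1) * p % q then sstar else sstar - 1

open Classical in
/-- Iterated construction of suffixes of the bifurcation address, from the tail
`(sstar) s` backwards. -/
def gfun (s : Addr) (u : ℕ → ℤ) (n : ℕ) (sstar : ℤ) (p q N : ℕ) : ℕ → Addr
  | 0 => consAddr (C sstar) s
  | k + 1 =>
      consAddr
        (C (if addrLt s (gfun s u n sstar p q N k) then tgt u n sstar p q (N - 1 - k)
            else tgt u n sstar p q (N - 1 - k) + 1))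
        (gfun s u n sstar p q N k)

open Classical in
/-- The sandwich property of the constructed entry. -/
lemma sandwich_exists {s a : Addr} (j : ℤ) (hne : a ≠ s) :
    addrLt (consAddr (C j) s)
        (consAddr (C (if addrLt s a then j else j + 1)) a) ∧
      addrLt (consAddr (C (if addrLt s a then j else j + 1)) a)
        (consAddr (C (j + 1)) s) := by
  by_cases h : addrLt s a
  · rw [if_pos h]
    exact ⟨consAddr_lt_consAddr.mpr (Or.inr ⟨rfl, h⟩),
      consAddr_lt_consAddr.mpr (Or.inl (C_lt_C.mpr (by omega)))⟩
  · have has : addrLt a s := (addrLt_total hne).resolve_right h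
    rw [if_neg h]
    exact ⟨consAddr_lt_consAddr.mpr (Or.inl (C_lt_C.mpr (by omega))),
      consAddr_lt_consAddr.mpr (Or.inr ⟨rfl, has⟩)⟩

open Classical in
/-- The constructed entry is the unique one with the sandwich property. -/
lemma sandwich_forced {s a : Addr} {j m : ℤ} (hne : a ≠ s)
    (h1 : addrLt (consAddr (C j) s) (consAddr (C m) a))
    (h2 : addrLt (consAddr (C m) a) (consAddr (C (j + 1)) s)) :
    m = if addrLt s a then j else j + 1 := by
  by_cases h : addrLt s a
  · rw [if_pos h]
    have hns : ¬ addrLt a s := addrLt_asymm h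
    rcases consAddr_lt_consAddr.mp h1 with hc | ⟨hc, -⟩
    · rcases consAddr_lt_consAddr.mp h2 with hc' | ⟨-, hc'⟩
      · have := C_lt_C.mp hc
        have := C_lt_C.mp hc'
        omega
      · exact absurd hc' hns
    · exact (C_inj hc).symm
  · have has : addrLt a s := (addrLt_total hne).resolve_right h
    have hns : ¬ addrLt s a := h
    rw [if_neg h]
    rcases consAddr_lt_consAddr.mp h1 with hc | ⟨-, hc⟩
    · rcases consAddr_lt_consAddr.mp h2 with hc' | ⟨hc', -⟩
      · have := C_lt_C.mp hc
        have := C_lt_C.mp hc'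
        omega
      · exact C_inj hc'
    · exact absurd hc hns

/-! ### Structural lemmas about `gfun` -/

section Gfun

variable (s : Addr) (u : ℕ → ℤ) (n : ℕ) (sstar : ℤ) (p q N : ℕ)

open Classical in
lemma gfun_succ (k : ℕ) :
    gfun s u n sstar p q N (k + 1) =
      consAddr
        (C (if addrLt s (gfun s u n sstar p q N k) then tgt u n sstar p q (N - 1 - k)
            else tgt u n sstar p q (N - 1 - k) + 1))
        (gfun s u n sstar p q N k) := rfl

lemma gfun_zero : gfun s u n sstar p q N 0 = consAddr (C sstar) s := rfl

lemma gfun_shift (k : ℕ) :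
    shift (gfun s u n sstar p q N (k + 1)) = gfun s u n sstar p q N k := by
  rw [gfun_succ]; exact shift_consAddr _ _

lemma gfun_add (k m : ℕ) :
    gfun s u n sstar p q N k (m + k) = consAddr (C sstar) s m := by
  induction k with
  | zero => rfl
  | succ k ih =>
    have h : m + (k + 1) = (m + k) + 1 := rfl
    rw [h, gfun_succ, consAddr_succ]
    exact ih

lemma gfun_int (k m : ℕ) (h : m < k) : ∃ j : ℤ, gfun s u n sstar p q N k m = C j := by
  induction k generalizing m with
  | zero => omega
  | succ k ih =>
    cases m with
    | zero => rw [gfun_succ]; exact ⟨_, rfl⟩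
    | succ m =>
      rw [gfun_succ, consAddr_succ]
      exact ih m (by omega)

lemma gfun_ne_top (hn : 2 ≤ n) (hs : IsIntermediate s n) (k m : ℕ) (h : m ≤ n - 1 + k) :
    gfun s u n sstar p q N k m ≠ ⊤ := by
  induction k generalizing m with
  | zero =>
    rw [gfun_zero]
    cases m with
    | zero => exact C_ne_top sstar
    | succ m =>
      rw [consAddr_succ]
      rcases lt_or_eq_of_le (show m + 2 ≤ n by omega) with h' | h'
      · obtain ⟨j, hj⟩ := hs.2.1 m h'
        rw [hj]; exact WithTop.coe_ne_top
      · obtain ⟨j, hj⟩ := hs.2.2.1 m h'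
        rw [hj]; exact WithTop.coe_ne_top
  | succ k ih =>
    rw [gfun_succ]
    cases m with
    | zero => exact C_ne_top _
    | succ m =>
      rw [consAddr_succ]
      exact ih m (by omega)

lemma gfun_ne (hn : 2 ≤ n) (hs : IsIntermediate s n) (k : ℕ) :
    gfun s u n sstar p q N k ≠ s := by
  intro h
  have h1 : gfun s u n sstar p q N k (n - 1 + k) ≠ ⊤ :=
    gfun_ne_top s u n sstar p q N hn hs k _ (le_refl _)
  have h2 : s (n - 1 + k) = ⊤ := hs.2.2.2 _ (by omega)
  rw [h] at h1
  exact h1 h2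

lemma gfun_shiftIter (i : ℕ) (h : i ≤ N) :
    shiftIter (gfun s u n sstar p q N N) i = gfun s u n sstar p q N (N - i) := by
  induction i with
  | zero => simp
  | succ i ih =>
    rw [shiftIter_succ, ih (by omega)]
    have h' : N - i = (N - (i + 1)) + 1 := by omega
    rw [h', gfun_shift]

end Gfun

/-- Let `s` be an intermediate external address of length `n ≥ 2` with
kneading sequence `K(s) = u_1 … u_{n-1} *`, let `s* ∈ ℤ` and let `p/q ∈ (0,1)` be in
lowest terms. Then there is a unique intermediate external address `s'` of length `qn`
with `itin_s(s') = u_1 … u_{n-1} m_1 ⋯ u_1 … u_{n-1} m_q` as above. -/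
theorem stmt8 (n : ℕ) (hn : 2 ≤ n) (s : Addr) (hs : IsIntermediate s n)
    (u : ℕ → ℤ) (hK : itin s s = finWord u n)
    (sstar : ℤ) (p q : ℕ) (hp : 0 < p) (hpq : p < q) (hcop : Nat.Coprime p q) :
    ∃! s' : Addr, IsIntermediate s' (q * n) ∧ itin s s' = bifItin u n sstar p q := by
  classical
  have hq2 : 2 ≤ q := by omega
  have hnpos : 0 < n := by omega
  -- arithmetic setup
  have hle1 : n ≤ (q - 1) * n := Nat.le_mul_of_pos_left n (by omega)
  have hle2 : n ≤ q * n := Nat.le_mul_of_pos_left n (by omega)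
  have hmul2 : q * n = (q - 1) * n + n := by
    have h := Nat.sub_one_mul q n
    omega
  have hmul1 : (q - 1) * n = (q - 2) * n + n := by
    have h : (q - 2) * n = (q - 1 - 1) * n := by
      congr 1
    have h2 := Nat.sub_one_mul (q - 1) n
    omega
  set N : ℕ := (q - 1) * n - 1 with hNdef
  have hN1 : N + 1 = (q - 1) * n := by omega
  have hNe : N = (q - 2) * n + (n - 1) := by omega
  have hdm : ∀ k, k < n → ((q - 1) * n + k) % n = k ∧ ((q - 1) * n + k) / n = q - 1 := by
    intro k hk
    constructor
    · rw [Nat.add_comm, Nat.add_mul_mod_self_right, Nat.mod_eq_of_lt hk]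
    · rw [Nat.add_comm, Nat.add_mul_div_right _ _ hnpos, Nat.div_eq_of_lt hk]
      omega
  have hNmod : N % n = n - 1 := by
    rw [hNe, Nat.add_comm, Nat.add_mul_mod_self_right, Nat.mod_eq_of_lt (by omega)]
  have hNdiv : N / n = q - 2 := by
    rw [hNe, Nat.add_comm, Nat.add_mul_div_right _ _ hnpos, Nat.div_eq_of_lt (by omega)]
    omega
  -- values of `bifItin`
  have hbifN : bifItin u n sstar p q N = ItinEntry.bdy sstar := by
    simp only [bifItin]
    rw [if_neg (by omega : ¬ q * n ≤ N + 1), if_neg (by omega : ¬ N % n + 1 < n),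
      if_pos (by omega : N / n + 2 = q)]
  have hbif_lt : ∀ i, i < N → bifItin u n sstar p q i = ItinEntry.int (tgt u n sstar p q i) := by
    intro i hi
    have hnle : ¬ q * n ≤ i + 1 := by omega
    simp only [bifItin, tgt]
    rw [if_neg hnle]
    by_cases hm : i % n + 1 < n
    · rw [if_pos hm, if_pos hm]
    · rw [if_neg hm, if_neg hm]
      have hdm' := Nat.div_add_mod i n
      have himod : i % n = n - 1 := by
        have := Nat.mod_lt i hnpos
        omega
      have hq : ¬ (i / n + 2 = q) := by
        have hmm : n * (i / n + 1) = n * (i / n) + n := by ring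
        have hc2 : (q - 1) * n = n * (q - 1) := Nat.mul_comm _ _
        have hlt : n * (i / n + 1) < n * (q - 1) := by omega
        have := Nat.lt_of_mul_lt_mul_left hlt
        omega
      rw [if_neg hq]
      by_cases hc : q - p < (i / n + 1) * p % q
      · rw [if_pos hc, if_pos hc]
      · rw [if_neg hc, if_neg hc]
  -- the construction
  set G : ℕ → Addr := gfun s u n sstar p q N with hGdef
  set s' := G N with hs'def
  have hGne : ∀ k, G k ≠ s := fun k => gfun_ne s u n sstar p q N hn hs k
  have hA : ∀ i, i ≤ N → shiftIter s' i = G (N - i) := fun i hi =>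
    gfun_shiftIter s u n sstar p q N i hi
  have hAN : shiftIter s' N = consAddr (C sstar) s := by
    rw [hA N (le_refl N), Nat.sub_self, hGdef, gfun_zero]
  have hstail : shiftIter s' (N + 1) = s := by
    rw [shiftIter_succ, hAN, shift_consAddr]
  have htail : ∀ i, N + 1 ≤ i → shiftIter s' i = shiftIter s (i - (N + 1)) := by
    intro i hi
    obtain ⟨m, rfl⟩ : ∃ m, i = m + (N + 1) := ⟨i - (N + 1), by omega⟩
    rw [Nat.add_sub_cancel, ← shiftIter_add, hstail]
  have hentry : ∀ k, N ≤ k → s' k = consAddr (C sstar) s (k - N) := by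
    intro k hk
    obtain ⟨m, rfl⟩ : ∃ m, k = m + N := ⟨k - N, by omega⟩
    rw [Nat.add_sub_cancel, hs'def, hGdef]
    exact gfun_add s u n sstar p q N N m
  have htop : ∀ k, N + n ≤ k → s' k = ⊤ := by
    intro k hk
    rw [hentry k (by omega)]
    obtain ⟨m, hm⟩ : ∃ m, k - N = m + 1 := ⟨k - N - 1, by omega⟩
    rw [hm, consAddr_succ]
    exact hs.2.2.2 m (by omega)
  -- s' is intermediate of length q * n
  have hinter : IsIntermediate s' (q * n) := by
    refine ⟨by omega, ?_, ?_, ?_⟩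
    · intro k hk
      rcases lt_trichotomy k N with h | h | h
      · exact gfun_int s u n sstar p q N N k h
      · subst h
        rw [hentry N (le_refl N), Nat.sub_self]
        exact ⟨sstar, rfl⟩
      · obtain ⟨m, rfl⟩ : ∃ m, k = (m + 1) + N := ⟨k - N - 1, by omega⟩
        rw [hentry _ (by omega), Nat.add_sub_cancel, consAddr_succ]
        exact hs.2.1 m (by omega)
    · intro k hk
      obtain ⟨m, rfl⟩ : ∃ m, k = (m + 1) + N := ⟨k - N - 1, by omega⟩
      rw [hentry _ (by omega), Nat.add_sub_cancel, consAddr_succ]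
      exact hs.2.2.1 m (by omega)
    · intro k hk
      exact htop k (by omega)
  -- s' has the required itinerary
  have hitin : itin s s' = bifItin u n sstar p q := by
    funext i
    rcases lt_trichotomy i N with hi | hi | hi
    · rw [hbif_lt i hi]
      obtain ⟨d, hd1, hd2⟩ : ∃ d, N - i - 1 = d ∧ N - i = d + 1 :=
        ⟨N - i - 1, rfl, by omega⟩
      have hsh : shiftIter s' i =
          consAddr (C (if addrLt s (G d) then tgt u n sstar p q i
            else tgt u n sstar p q i + 1)) (G d) := by
        rw [hA i (le_of_lt hi), hd2, hGdef, gfun_succ,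
          show N - 1 - d = i from by omega]
      have hne' : ∀ j' : ℤ, shiftIter s' i ≠ consAddr (C j') s := by
        intro j' hj'
        rw [hsh] at hj'
        exact hGne _ (consAddr_inj hj').2
      obtain ⟨h1, h2⟩ := sandwich_exists (s := s) (a := G d)
        (tgt u n sstar p q i) (hGne _)
      refine itin_spec_int hne' ?_ ?_
      · rw [hsh]; exact h1
      · rw [hsh]; exact h2
    · subst hi
      rw [hbifN]
      exact itin_spec_bdy hAN
    · by_cases hqn : q * n ≤ i + 1
      · have hT : shiftIter s' i = topAddr := by
          funext j
          show s' (j + i) = ⊤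
          exact htop _ (by omega)
        rw [itin_spec_star hT]
        simp only [bifItin]
        rw [if_pos hqn]
      · obtain ⟨k, rfl⟩ : ∃ k, i = (N + 1) + k := ⟨i - (N + 1), by omega⟩
        have hk : k + 1 < n := by omega
        have hsh : shiftIter s' ((N + 1) + k) = shiftIter s k := by
          rw [htail _ (by omega), Nat.add_sub_cancel_left]
        rw [itin_congr hsh, congrFun hK k]
        simp only [finWord, bifItin]
        rw [if_pos hk, if_neg (by omega : ¬ q * n ≤ (N + 1) + k + 1),
          show (N + 1) + k = (q - 1) * n + k from by omega, (hdm k (by omega)).1,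
          if_pos (by omega : k + 1 < n)]
  refine ⟨s', ⟨hinter, hitin⟩, ?_⟩
  rintro s'' ⟨hint2, hit2⟩
  have hstep : ∀ i, i ≤ N → shiftIter s'' (N - i) = G i := by
    intro i
    induction i with
    | zero =>
      intro _
      have hb : itin s s'' N = ItinEntry.bdy sstar := by
        rw [congrFun hit2 N, hbifN]
      have hbd := itin_eq_bdy hb
      rw [Nat.sub_zero, hGdef, gfun_zero]
      exact hbd
    | succ i ih =>
      intro hiN
      have htail2 : shiftIter s'' ((N - (i + 1)) + 1) = G i := by
        rw [show (N - (i + 1)) + 1 = N - i from by omega]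
        exact ih (by omega)
      set i' := N - (i + 1) with hi'
      have hi'N : i' < N := by omega
      have hii : itin s s'' i' = ItinEntry.int (tgt u n sstar p q i') := by
        rw [congrFun hit2 i', hbif_lt i' hi'N]
      obtain ⟨h1, h2⟩ := itin_eq_int hii
      obtain ⟨m, hm⟩ := hint2.2.1 i' (by omega)
      have hcons : shiftIter s'' i' = consAddr (C m) (G i) := by
        rw [shiftIter_eq_cons s'' i', htail2, hm]
      rw [hcons] at h1 h2
      have hforced := sandwich_forced (hGne i) h1 h2
      rw [hcons, hforced, hGdef, gfun_succ, show N - 1 - i = i' from by omega]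
  have hfinal := hstep N (le_refl N)
  rw [Nat.sub_self, shiftIter_zero] at hfinal
  rw [hs'def]
  exact hfinal

end
end

section
/- For a rational α = p/q ∈ (0,1) in lowest terms, define the finite word w(α) = (w_1(α), …, w_{q-1}(α)) with entries in {0, 1/2, 1} by: w_j(α) = 1 if {jα} > 1-α, w_j(α) = 0 if {jα} < 1-α, and w_j(α) = 1/2 if {jα} = 1-α; for 1 ≤ j ≤ q-1 the last case occurs exactly for j = q-1. Then the map α ↦ w(α) is strictly increasing with respect to lexicographic order: if 0 < p¹/q¹ < p²/q² < 1 are rationals in lowest terms, then there is an index J ≤ min(q¹, q²) - 1 such that w_j(p¹/q¹) = w_j(p²/q²) for all j < J and w_J(p¹/q¹) < w_J(p²/q²). -/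
/-- The word `w(α) = (w_1(α), …, w_{q-1}(α))` associated to a rational
`α = p/q ∈ (0,1)` in lowest terms: `w_j(α) = 1` if `{jα} > 1 - α`, `w_j(α) = 0` if
`{jα} < 1 - α`, and `w_j(α) = 1/2` if `{jα} = 1 - α`. -/
def bifWord (α : ℚ) (j : ℕ) : ℚ :=
  if 1 - α < Int.fract ((j : ℚ) * α) then 1
  else if Int.fract ((j : ℚ) * α) < 1 - α then 0
  else 1 / 2

/-!
For `0 ≤ α < 1` the letter `w_j(α)` vanishes exactly when `⌊(j+1)α⌋ = ⌊jα⌋`, and otherwise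
`⌊(j+1)α⌋ = ⌊jα⌋ + 1`. Hence two words with a common prefix up to `J` give equal floors
`⌊jα⌋ = ⌊jβ⌋` for `j ≤ J`, and then `w_J` is monotone in `{Jα} + α`, which for `α ≤ β` is
at most `{Jβ} + β`: at the first difference the letter of `α` is the smaller one.
A difference occurs before `min(q¹, q²)`: if the words of `α < β` agreed up to the
denominator `q` of `β = p/q`, then `⌊qα⌋ = ⌊qβ⌋ = p > qα`; if they agreed up to the denominator
`q` of `α = p/q`, the common letter `1/2` at `q - 1` would make `qβ` the integer
`⌊(q-1)β⌋ + 1 = ⌊(q-1)α⌋ + 1 = qα`.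
-/

section

variable {α β : ℚ}

lemma bifWord_eq_zero_iff (j : ℕ) : bifWord α j = 0 ↔ Int.fract ((j : ℚ) * α) < 1 - α := by
  unfold bifWord
  split_ifs <;> norm_num <;> linarith

lemma bifWord_zero (hα : α < 1) : bifWord α 0 = 0 := by
  simpa [bifWord_eq_zero_iff] using hα

lemma floor_succ_mul (hα₀ : 0 ≤ α) (hα₁ : α < 1) (j : ℕ) :
    ⌊((j + 1 : ℕ) : ℚ) * α⌋ = ⌊(j : ℚ) * α⌋ + if bifWord α j = 0 then 0 else 1 := by
  have hsplit := Int.floor_add_fract ((j : ℚ) * α)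
  have hlo := Int.fract_nonneg ((j : ℚ) * α)
  have hhi := Int.fract_lt_one ((j : ℚ) * α)
  rw [Int.floor_eq_iff]
  split_ifs with h <;> simp only [bifWord_eq_zero_iff, not_lt] at h <;> push_cast <;>
    constructor <;> linarith

lemma floor_mul_eq_of_bifWord_eq (hα₀ : 0 ≤ α) (hα₁ : α < 1) (hβ₀ : 0 ≤ β) (hβ₁ : β < 1)
    {J : ℕ} (hag : ∀ j, 1 ≤ j → j < J → bifWord α j = bifWord β j) {j : ℕ} (hj : j ≤ J) :
    ⌊(j : ℚ) * α⌋ = ⌊(j : ℚ) * β⌋ := by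
  induction j with
  | zero => simp
  | succ k ih =>
    have hk : bifWord α k = bifWord β k := by
      rcases Nat.eq_zero_or_pos k with rfl | hk
      · rw [bifWord_zero hα₁, bifWord_zero hβ₁]
      · exact hag k hk (by omega)
    rw [floor_succ_mul hα₀ hα₁, floor_succ_mul hβ₀ hβ₁, ih (by omega), hk]

lemma bifWord_le_of_floor_mul_eq (hαβ : α ≤ β) {j : ℕ}
    (hf : ⌊(j : ℚ) * α⌋ = ⌊(j : ℚ) * β⌋) : bifWord α j ≤ bifWord β j := by
  have hfQ : (⌊(j : ℚ) * α⌋ : ℚ) = ⌊(j : ℚ) * β⌋ := by exact_mod_cast hf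
  have hmul : (j : ℚ) * α ≤ (j : ℚ) * β := by gcongr
  unfold bifWord
  rw [← Int.self_sub_floor, ← Int.self_sub_floor]
  split_ifs <;> norm_num <;> linarith

lemma bifWord_lt_of_eq_of_ne (hα₀ : 0 ≤ α) (hα₁ : α < 1) (hβ₁ : β < 1) (hαβ : α ≤ β)
    {J : ℕ} (hag : ∀ j, 1 ≤ j → j < J → bifWord α j = bifWord β j)
    (hne : bifWord α J ≠ bifWord β J) : bifWord α J < bifWord β J :=
  (bifWord_le_of_floor_mul_eq hαβ
    (floor_mul_eq_of_bifWord_eq hα₀ hα₁ (hα₀.trans hαβ) hβ₁ hag le_rfl)).lt_of_ne hne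

lemma succ_mul_eq_of_bifWord_eq_half {j : ℕ} (h : bifWord α j = 1 / 2) :
    ((j + 1 : ℕ) : ℚ) * α = ⌊(j : ℚ) * α⌋ + 1 := by
  have hsplit := Int.floor_add_fract ((j : ℚ) * α)
  unfold bifWord at h
  split_ifs at h with hA hB <;> norm_num at h
  push_cast
  linarith [le_antisymm (not_lt.1 hA) (not_lt.1 hB)]

lemma bifWord_div_pred {p q : ℕ} (hp : 0 < p) (hpq : p < q) :
    bifWord (p / q) (q - 1) = 1 / 2 := by
  have hq : (0 : ℚ) < q := by exact_mod_cast hp.trans hpq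
  have hα₀ : (0 : ℚ) < p / q := by positivity
  have hα₁ : (p / q : ℚ) < 1 := (div_lt_one hq).2 (by exact_mod_cast hpq)
  have hmul : ((q - 1 : ℕ) : ℚ) * (p / q) = ((p - 1 : ℤ) : ℚ) + (1 - p / q) := by
    rw [Nat.cast_pred (hp.trans hpq)]
    push_cast
    field_simp
    ring
  have hfract : Int.fract (((q - 1 : ℕ) : ℚ) * (p / q)) = 1 - p / q := by
    rw [hmul, Int.fract_intCast_add, Int.fract_eq_self]
    constructor <;> linarith
  simp [bifWord, hfract]

lemma exists_bifWord_ne_of_lt_div {p q : ℕ} (hα₀ : 0 ≤ α) (hlt : α < p / q)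
    (hβ₁ : (p / q : ℚ) < 1) : ∃ j, 1 ≤ j ∧ j < q ∧ bifWord α j ≠ bifWord (p / q) j := by
  by_contra! hag
  have hq : (q : ℚ) ≠ 0 := by
    rintro hq
    rw [hq, div_zero] at hlt
    linarith
  have hf := floor_mul_eq_of_bifWord_eq hα₀ (hlt.trans hβ₁) (hα₀.trans hlt.le) hβ₁
    (fun j h1 h2 ↦ hag j h1 h2) (le_refl q)
  rw [mul_div_cancel₀ _ hq, Int.floor_natCast] at hf
  have hqα : (q : ℚ) * α < p := by
    calc (q : ℚ) * α < q * (p / q) := by gcongr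
      _ = p := mul_div_cancel₀ _ hq
  exact (Int.floor_lt.2 (by exact_mod_cast hqα)).ne hf

lemma exists_bifWord_ne_of_div_lt {p q : ℕ} (hp : 0 < p) (hpq : p < q) (hlt : p / q < β)
    (hβ₁ : β < 1) : ∃ j, 1 ≤ j ∧ j < q ∧ bifWord (p / q) j ≠ bifWord β j := by
  by_contra! hag
  have hq : (0 : ℚ) < q := by exact_mod_cast hp.trans hpq
  have hα₀ : (0 : ℚ) ≤ p / q := by positivity
  have hα₁ : (p / q : ℚ) < 1 := hlt.trans hβ₁
  have hhalf := bifWord_div_pred hp hpq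
  have hf := floor_mul_eq_of_bifWord_eq hα₀ hα₁ (hα₀.trans hlt.le) hβ₁
    (fun j h1 h2 ↦ hag j h1 (by omega)) (le_refl (q - 1))
  have hqα := succ_mul_eq_of_bifWord_eq_half hhalf
  have hqβ := succ_mul_eq_of_bifWord_eq_half (hag (q - 1) (by omega) (by omega) ▸ hhalf)
  rw [Nat.sub_add_cancel (by omega : 1 ≤ q), hf] at hqα
  rw [Nat.sub_add_cancel (by omega : 1 ≤ q)] at hqβ
  have : (q : ℚ) * (p / q) < q * β := by gcongr
  linarith

end

lemma exists_first_ne {X : Type*} {f g : ℕ → X} {n : ℕ}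
    (h : ∃ j, 1 ≤ j ∧ j ≤ n ∧ f j ≠ g j) :
    ∃ J, 1 ≤ J ∧ J ≤ n ∧ (∀ j, 1 ≤ j → j < J → f j = g j) ∧ f J ≠ g J := by
  classical
  obtain ⟨j₀, hj₀, hj₀n, hne₀⟩ := h
  have hex : ∃ j, 1 ≤ j ∧ f j ≠ g j := ⟨j₀, hj₀, hne₀⟩
  obtain ⟨hJ, hneJ⟩ := Nat.find_spec hex
  refine ⟨Nat.find hex, hJ, (Nat.find_min' hex ⟨hj₀, hne₀⟩).trans hj₀n, ?_, hneJ⟩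
  intro j hj hjJ
  by_contra hne
  exact Nat.find_min hex hjJ ⟨hj, hne⟩

theorem stmt9_general (p1 q1 p2 q2 : ℕ)
    (hp1 : 0 < p1) (h1 : p1 < q1)
    (h2 : p2 < q2)
    (hlt : (p1 : ℚ) / q1 < (p2 : ℚ) / q2) :
    ∃ J : ℕ, 1 ≤ J ∧ J ≤ min q1 q2 - 1 ∧
      (∀ j, 1 ≤ j → j < J → bifWord ((p1 : ℚ) / q1) j = bifWord ((p2 : ℚ) / q2) j) ∧
      bifWord ((p1 : ℚ) / q1) J < bifWord ((p2 : ℚ) / q2) J := by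
  have hα₀ : (0 : ℚ) ≤ p1 / q1 := by positivity
  have hα₁ : (p1 / q1 : ℚ) < 1 := (div_lt_one (by exact_mod_cast (Nat.zero_lt_of_lt h1))).2 (by exact_mod_cast h1)
  have hβ₁ : (p2 / q2 : ℚ) < 1 := (div_lt_one (by exact_mod_cast (Nat.zero_lt_of_lt h2))).2 (by exact_mod_cast h2)
  have hex : ∃ j, 1 ≤ j ∧ j ≤ min q1 q2 - 1 ∧
      bifWord ((p1 : ℚ) / q1) j ≠ bifWord ((p2 : ℚ) / q2) j := by
    rcases le_total q1 q2 with hq | hq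
    · obtain ⟨j, hj, hjq, hne⟩ := exists_bifWord_ne_of_div_lt hp1 h1 hlt hβ₁
      exact ⟨j, hj, by omega, hne⟩
    · obtain ⟨j, hj, hjq, hne⟩ := exists_bifWord_ne_of_lt_div hα₀ hlt hβ₁
      exact ⟨j, hj, by omega, hne⟩
  obtain ⟨J, hJ, hJn, hag, hne⟩ := exists_first_ne hex
  exact ⟨J, hJ, hJn, hag, bifWord_lt_of_eq_of_ne hα₀ hα₁ hβ₁ hlt.le hag hne⟩

/-- The map `α ↦ w(α)` is strictly increasing with respect to the
lexicographic order: if `0 < p¹/q¹ < p²/q² < 1` are rationals in lowest terms, then there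
is an index `J ≤ min(q¹, q²) - 1` with `w_j(p¹/q¹) = w_j(p²/q²)` for all `j < J` and
`w_J(p¹/q¹) < w_J(p²/q²)`. -/
theorem stmt9 (p1 q1 p2 q2 : ℕ)
    (hp1 : 0 < p1) (h1 : p1 < q1) (hc1 : Nat.Coprime p1 q1)
    (hp2 : 0 < p2) (h2 : p2 < q2) (hc2 : Nat.Coprime p2 q2)
    (hlt : (p1 : ℚ) / q1 < (p2 : ℚ) / q2) :
    ∃ J : ℕ, 1 ≤ J ∧ J ≤ min q1 q2 - 1 ∧
      (∀ j, 1 ≤ j → j < J → bifWord ((p1 : ℚ) / q1) j = bifWord ((p2 : ℚ) / q2) j) ∧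
      bifWord ((p1 : ℚ) / q1) J < bifWord ((p2 : ℚ) / q2) J :=
  stmt9_general p1 q1 p2 q2 hp1 h1 h2 hlt
end

section
/- Let s be an intermediate external address of length n ≥ 2 with kneading sequence K(s) = u_1 … u_{n-1} *, and let s⁻ < s < s⁺ be addresses in Ṡ such that σ^j(s) ∉ [s⁻, s⁺] for all 1 ≤ j ≤ n-2. Let I be either the interval [s⁻, s] or the interval [s, s⁺]. Suppose r¹, r² ∈ I ∖ {s} are such that for each ℓ ∈ {1,2} and each j ≥ 0 for which σ^{jn}(r^ℓ) is defined, one has σ^{jn}(r^ℓ) ∈ I and itin_s(σ^{jn}(r^ℓ)) begins with u_1 … u_{n-1}. Then: if itin_s(r¹) = itin_s(r²) then r¹ = r²; and if itin_s(r¹) < itin_s(r²) then r¹ < r². -/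
noncomputable section

/-- The order on itinerary entries: `m < [j/(j-1)]` iff `m ≤ j - 1`,
`[j/(j-1)] < m` iff `j ≤ m`, boundary symbols compared by their upper labels,
and the symbol `*` incomparable to every entry. -/
def ItinEntry.Lt : ItinEntry → ItinEntry → Prop
  | ItinEntry.int m, ItinEntry.int m' => m < m'
  | ItinEntry.int m, ItinEntry.bdy j => m ≤ j - 1
  | ItinEntry.bdy j, ItinEntry.int m => j ≤ m
  | ItinEntry.bdy j, ItinEntry.bdy j' => j < j'
  | _, _ => False

/-- The lexicographic strict order on itineraries. -/
def itinLt (v w : ℕ → ItinEntry) : Prop :=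
  ∃ k, (∀ i, i < k → v i = w i) ∧ ItinEntry.Lt (v k) (w k)

namespace Stmt10Aux

/-! ### Basic order lemmas on addresses -/

lemma addrLt_irrefl (a : Addr) : ¬ addrLt a a := by
  rintro ⟨k, -, hk⟩; exact lt_irrefl _ hk

lemma addrLt_ne {a b : Addr} (h : addrLt a b) : a ≠ b := by
  rintro rfl; exact addrLt_irrefl a h

lemma addrLt_trans {a b c : Addr} (h1 : addrLt a b) (h2 : addrLt b c) : addrLt a c := by
  obtain ⟨k1, e1, l1⟩ := h1
  obtain ⟨k2, e2, l2⟩ := h2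
  rcases lt_trichotomy k1 k2 with h | h | h
  · exact ⟨k1, fun j hj => (e1 j hj).trans (e2 j (hj.trans h)), (e2 k1 h) ▸ l1⟩
  · subst h; exact ⟨k1, fun j hj => (e1 j hj).trans (e2 j hj), l1.trans l2⟩
  · exact ⟨k2, fun j hj => (e1 j (hj.trans h)).trans (e2 j hj), (e1 k2 h) ▸ l2⟩

lemma addrLt_asymm {a b : Addr} (h1 : addrLt a b) (h2 : addrLt b a) : False :=
  addrLt_irrefl a (addrLt_trans h1 h2)

lemma addrLt_trichotomy (a b : Addr) : addrLt a b ∨ a = b ∨ addrLt b a := by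
  by_cases h : a = b
  · exact Or.inr (Or.inl h)
  have hne : ∃ k, a k ≠ b k := by
    by_contra hc; push_neg at hc; exact h (funext hc)
  classical
  have hk : a (Nat.find hne) ≠ b (Nat.find hne) := Nat.find_spec hne
  have hmin : ∀ j, j < Nat.find hne → a j = b j := fun j hj => by
    have := Nat.find_min hne hj; simpa using this
  rcases lt_or_gt_of_ne hk with h' | h'
  · exact Or.inl ⟨_, hmin, h'⟩
  · exact Or.inr (Or.inr ⟨_, fun j hj => (hmin j hj).symm, h'⟩)

lemma addrLe_refl (a : Addr) : addrLe a a := Or.inr rfl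

lemma addrLt_of_le_of_lt {a b c : Addr} (h1 : addrLe a b) (h2 : addrLt b c) : addrLt a c := by
  rcases h1 with h1 | rfl
  · exact addrLt_trans h1 h2
  · exact h2

lemma addrLt_of_lt_of_le {a b c : Addr} (h1 : addrLt a b) (h2 : addrLe b c) : addrLt a c := by
  rcases h2 with h2 | rfl
  · exact addrLt_trans h1 h2
  · exact h1

lemma addrLe_trans {a b c : Addr} (h1 : addrLe a b) (h2 : addrLe b c) : addrLe a c := by
  rcases h2 with h2 | rfl
  · exact Or.inl (addrLt_of_le_of_lt h1 h2)
  · exact h1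

lemma addrLt_of_le_ne {a b : Addr} (h1 : addrLe a b) (h2 : a ≠ b) : addrLt a b := by
  rcases h1 with h1 | rfl
  · exact h1
  · exact absurd rfl h2

lemma not_addrLt_top (a : Addr) : ¬ addrLt topAddr a := by
  rintro ⟨k, -, hk⟩; exact not_top_lt hk

lemma ne_top_of_addrLt {a b : Addr} (h : addrLt a b) : a ≠ topAddr := by
  rintro rfl; exact not_addrLt_top b h

lemma addrLt_top {a : Addr} (h : a ≠ topAddr) : addrLt a topAddr := by
  have hne : ∃ k, a k ≠ ⊤ := by
    by_contra hc; push_neg at hc; exact h (funext fun k => hc k)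
  classical
  refine ⟨Nat.find hne, fun j hj => ?_, (Nat.find_spec hne).lt_top⟩
  have := Nat.find_min hne hj; simp only [not_not] at this
  simp [this, topAddr]

lemma addrLt_e0_le {a b : Addr} (h : addrLt a b) : a 0 ≤ b 0 := by
  obtain ⟨k, e, l⟩ := h
  rcases Nat.eq_zero_or_pos k with rfl | hk
  · exact le_of_lt l
  · exact (e 0 hk).le

lemma addrLt_of_e0_lt {a b : Addr} (h : a 0 < b 0) : addrLt a b :=
  ⟨0, fun j hj => absurd hj (Nat.not_lt_zero j), h⟩

lemma addrLt_shift_of {a b : Addr} (h0 : a 0 = b 0) (h : addrLt a b) :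
    addrLt (shiftIter a 1) (shiftIter b 1) := by
  obtain ⟨k, e, l⟩ := h
  match k with
  | 0 => rw [h0] at l; exact absurd l (lt_irrefl _)
  | (k+1) => exact ⟨k, fun j hj => e (j+1) (by omega), l⟩

lemma addrLt_of_shift {a b : Addr} (h0 : a 0 = b 0)
    (h : addrLt (shiftIter a 1) (shiftIter b 1)) : addrLt a b := by
  obtain ⟨k, e, l⟩ := h
  refine ⟨k+1, fun j hj => ?_, l⟩
  match j with
  | 0 => exact h0
  | (j+1) => exact e j (by omega)

lemma addr_ext0 {a b : Addr} (h0 : a 0 = b 0) (h1 : shiftIter a 1 = shiftIter b 1) : a = b := by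
  funext k
  match k with
  | 0 => exact h0
  | (k+1) => exact congrFun h1 k

/-! ### consAddr and shiftIter -/

@[simp] lemma consAddr_zero (x : Entry) (a : Addr) : consAddr x a 0 = x := rfl

@[simp] lemma consAddr_succ (x : Entry) (a : Addr) (k : ℕ) : consAddr x a (k+1) = a k := by
  simp [consAddr]

@[simp] lemma shift_cons (x : Entry) (a : Addr) : shiftIter (consAddr x a) 1 = a :=
  funext fun k => by simp [shiftIter]

@[simp] lemma shiftIter_zero (a : Addr) : shiftIter a 0 = a := funext fun j => rfl

lemma shiftIter_add (a : Addr) (m k : ℕ) :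
    shiftIter (shiftIter a m) k = shiftIter a (k + m) :=
  funext fun j => congrArg a (by omega)

lemma shiftIter_succ (a : Addr) (p : ℕ) :
    shiftIter a (p+1) = shiftIter (shiftIter a p) 1 := by
  rw [shiftIter_add, Nat.add_comm]

@[simp] lemma shiftIter_top (k : ℕ) : shiftIter topAddr k = topAddr := rfl

lemma shiftIter_apply (a : Addr) (k j : ℕ) : shiftIter a k j = a (j + k) := rfl

end Stmt10Aux
namespace Stmt10Aux

/-! ### Sectors -/

/-- The address `j s`. -/
def jS (s : Addr) (j : ℤ) : Addr := consAddr ((j : ℝ) : Entry) s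

/-- `a` lies strictly in the sector between `js` and `(j+1)s`. -/
def sect (s : Addr) (j : ℤ) (a : Addr) : Prop :=
  addrLt (jS s j) a ∧ addrLt a (jS s (j + 1))

lemma jS_zero (s : Addr) (j : ℤ) : jS s j 0 = ((j : ℝ) : Entry) := rfl

@[simp] lemma jS_shift (s : Addr) (j : ℤ) : shiftIter (jS s j) 1 = s := shift_cons _ _

lemma jS_ne_top (s : Addr) (j : ℤ) : jS s j ≠ topAddr := by
  intro h
  have : jS s j 0 = (⊤ : Entry) := by rw [h]; rfl
  exact (WithTop.coe_ne_top) this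

lemma jS_mono {s : Addr} {j j' : ℤ} (h : j < j') : addrLt (jS s j) (jS s j') :=
  addrLt_of_e0_lt (by
    simp only [jS, consAddr_zero]
    exact_mod_cast h)

lemma jS_lt_elim {s : Addr} {j j' : ℤ} (h : addrLt (jS s j) (jS s j')) : j < j' := by
  have h0 := addrLt_e0_le h
  simp only [jS, consAddr_zero] at h0
  have : (j : ℝ) ≤ (j' : ℝ) := by exact_mod_cast h0
  have hle : j ≤ j' := by exact_mod_cast this
  rcases lt_or_eq_of_le hle with h' | rfl
  · exact h'
  · exact absurd h (addrLt_irrefl _)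

lemma jS_le {s : Addr} {j j' : ℤ} (h : j ≤ j') : addrLe (jS s j) (jS s j') := by
  rcases lt_or_eq_of_le h with h' | rfl
  · exact Or.inl (jS_mono h')
  · exact Or.inr rfl

lemma sect_disjoint {s : Addr} {j j' : ℤ} {a : Addr} (h : sect s j a) (h' : sect s j' a) :
    j = j' := by
  by_contra hne
  rcases lt_or_gt_of_ne hne with hlt | hlt
  · exact addrLt_asymm h'.1 (addrLt_of_lt_of_le h.2 (jS_le (by omega)))
  · exact addrLt_asymm h.1 (addrLt_of_lt_of_le h'.2 (jS_le (by omega)))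

lemma sect_ne_top {s : Addr} {j : ℤ} {a : Addr} (h : sect s j a) : a ≠ topAddr := by
  rintro rfl; exact not_addrLt_top _ h.2

/-! ### Structure of addresses in Ṡ -/

lemma int_ne_half (p q : ℤ) : ((p : ℝ) : Entry) ≠ ((((q : ℝ) + 1/2 : ℝ)) : Entry) := by
  intro h
  have h' : (p : ℝ) = (q : ℝ) + 1/2 := by exact_mod_cast h
  have h2 : ((2*p : ℤ) : ℝ) = ((2*q+1 : ℤ) : ℝ) := by push_cast; linarith
  have : (2*p : ℤ) = 2*q+1 := by exact_mod_cast h2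
  omega

lemma InSDot_not_top {a : Addr} (h : InSDot a) : a ≠ topAddr := by
  rcases h with h | ⟨N, h2, hi⟩
  · obtain ⟨m, hm⟩ := h 0
    intro he
    rw [he] at hm
    exact (WithTop.coe_ne_top) hm.symm
  · obtain ⟨m, hm⟩ := hi.2.2.1 (N-2) (by omega)
    intro he
    rw [he] at hm
    exact (WithTop.coe_ne_top) hm.symm

lemma InSDot_shift1 {a : Addr} (h : InSDot a) :
    (shiftIter a 1 = topAddr ∧ ∃ m : ℤ, a 0 = (((m : ℝ) + 1/2 : ℝ) : Entry)) ∨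
    (InSDot (shiftIter a 1) ∧ ∃ m : ℤ, a 0 = ((m : ℝ) : Entry)) := by
  rcases h with h | ⟨N, h2, hi⟩
  · right
    exact ⟨Or.inl (fun k => h (k+1)), h 0⟩
  · rcases eq_or_lt_of_le h2 with hN | hN
    · left
      constructor
      · funext k
        exact hi.2.2.2 (k+1) (by omega)
      · exact hi.2.2.1 0 (by omega)
    · right
      constructor
      · refine Or.inr ⟨N - 1, by omega, by omega, fun k hk => hi.2.1 (k+1) (by omega),
          fun k hk => hi.2.2.1 (k+1) (by omega), fun k hk => hi.2.2.2 (k+1) (by omega)⟩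
      · exact hi.2.1 0 (by omega)

lemma InSDot_shiftIter {a : Addr} (h : InSDot a) :
    ∀ k, shiftIter a k ≠ topAddr → InSDot (shiftIter a k) := by
  intro k
  induction k with
  | zero => intro _; simpa using h
  | succ k ih =>
    intro hne
    rw [shiftIter_succ] at hne ⊢
    by_cases hk : shiftIter a k = topAddr
    · rw [hk] at hne; exact absurd rfl hne
    · rcases InSDot_shift1 (ih hk) with ⟨ht, -⟩ | ⟨hS, -⟩
      · exact absurd ht hne
      · exact hS

/-! ### Classification of points of Ṡ relative to the sector decomposition -/

lemma mem_sect_or_bdy {a : Addr} (ha : InSDot a) (s : Addr) :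
    (∃ j, a = jS s j) ∨ (∃ j, sect s j a) := by
  rcases InSDot_shift1 ha with ⟨htop, m, h0⟩ | ⟨hsd, m, h0⟩
  · right
    refine ⟨m, addrLt_of_e0_lt ?_, addrLt_of_e0_lt ?_⟩
    · rw [h0, jS_zero]
      exact_mod_cast (by norm_num : (m : ℝ) < (m : ℝ) + 1/2)
    · rw [h0, jS_zero]
      push_cast
      exact_mod_cast (by norm_num : (m : ℝ) + 1/2 < (m : ℝ) + 1)
  · rcases addrLt_trichotomy (shiftIter a 1) s with hlt | heq | hgt
    · right
      refine ⟨m - 1, addrLt_of_e0_lt ?_, ?_⟩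
      · rw [h0, jS_zero]
        exact_mod_cast (by norm_num : ((m : ℝ) - 1) < (m : ℝ))
      · refine addrLt_of_shift ?_ ?_
        · rw [h0, jS_zero]; norm_num
        · rw [jS_shift]; exact hlt
    · left
      refine ⟨m, addr_ext0 ?_ ?_⟩
      · rw [h0]; rfl
      · rw [jS_shift]; exact heq
    · right
      refine ⟨m, ?_, addrLt_of_e0_lt ?_⟩
      · refine addrLt_of_shift ?_ ?_
        · rw [h0]; rfl
        · rw [jS_shift]; exact hgt
      · rw [h0, jS_zero]
        exact_mod_cast (by norm_num : (m : ℝ) < (m : ℝ) + 1)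

/-- Class of a point of `Ṡ` inside a sector: low part (`A`), half point (`B`), high part (`C`). -/
lemma class_of_sect {s a : Addr} {j : ℤ} (ha : InSDot a) (hj : sect s j a) :
    (a 0 = ((j : ℝ) : Entry) ∧ addrLt s (shiftIter a 1) ∧ InSDot (shiftIter a 1)) ∨
    (a 0 = (((j : ℝ) + 1/2 : ℝ) : Entry) ∧ shiftIter a 1 = topAddr) ∨
    (a 0 = (((j : ℝ) + 1 : ℝ) : Entry) ∧ addrLt (shiftIter a 1) s ∧ InSDot (shiftIter a 1)) := by
  have hb1 : ((j : ℝ) : Entry) ≤ a 0 := by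
    have := addrLt_e0_le hj.1; rwa [jS_zero] at this
  have hb2 : a 0 ≤ (((j+1 : ℤ) : ℝ) : Entry) := by
    have := addrLt_e0_le hj.2; rwa [jS_zero] at this
  rcases InSDot_shift1 ha with ⟨htop, m, h0⟩ | ⟨hsd, m, h0⟩
  · rw [h0] at hb1 hb2
    have r1 : (j : ℝ) ≤ (m : ℝ) + 1/2 := by exact_mod_cast hb1
    have r2 : (m : ℝ) + 1/2 ≤ ((j+1 : ℤ) : ℝ) := by exact_mod_cast hb2
    have hmj : m = j := by
      push_cast at r2
      have : (j:ℝ) ≤ m + 1/2 ∧ (m:ℝ) + 1/2 ≤ j + 1 := ⟨r1, r2⟩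
      have h1 : j ≤ m := by
        by_contra hc
        push_neg at hc
        have : (m : ℝ) + 1 ≤ j := by exact_mod_cast hc
        linarith
      have h2 : m ≤ j := by
        by_contra hc
        push_neg at hc
        have : (j : ℝ) + 1 ≤ m := by exact_mod_cast hc
        linarith
      omega
    subst hmj
    exact Or.inr (Or.inl ⟨h0, htop⟩)
  · rw [h0] at hb1 hb2
    have r1 : (j : ℝ) ≤ (m : ℝ) := by exact_mod_cast hb1
    have r2 : (m : ℝ) ≤ ((j+1 : ℤ) : ℝ) := by exact_mod_cast hb2
    have h1 : j ≤ m := by exact_mod_cast r1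
    have h2 : m ≤ j + 1 := by exact_mod_cast r2
    rcases (by omega : m = j ∨ m = j + 1) with rfl | rfl
    · left
      refine ⟨h0, ?_, hsd⟩
      have := addrLt_shift_of (a := jS s m) (b := a) (by rw [jS_zero, h0]) hj.1
      rwa [jS_shift] at this
    · right; right
      refine ⟨by rw [h0]; push_cast; rfl, ?_, hsd⟩
      have := addrLt_shift_of (a := a) (b := jS s (j+1)) (by rw [jS_zero, h0]) hj.2
      rwa [jS_shift] at this

/-- σ is injective on the closure of each sector. -/
lemma sect_shift_inj {s a b : Addr} {j : ℤ} (ha : InSDot a) (hb : InSDot b)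
    (hja : sect s j a) (hjb : sect s j b) (h : shiftIter a 1 = shiftIter b 1) : a = b := by
  rcases class_of_sect ha hja with ⟨ha0, has, haS⟩ | ⟨ha0, hat⟩ | ⟨ha0, has, haS⟩ <;>
    rcases class_of_sect hb hjb with ⟨hb0, hbs, hbS⟩ | ⟨hb0, hbt⟩ | ⟨hb0, hbs, hbS⟩
  · exact addr_ext0 (by rw [ha0, hb0]) h
  · exact absurd (h.trans hbt) (InSDot_not_top haS)
  · exact absurd (addrLt_trans hbs has) (fun hh => addrLt_irrefl _ (h ▸ hh))
  · exact absurd (hat.symm.trans h) (fun hh => InSDot_not_top hbS hh.symm)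
  · exact addr_ext0 (by rw [ha0, hb0]) h
  · exact absurd (hat.symm.trans h) (fun hh => InSDot_not_top hbS hh.symm)
  · exact absurd (addrLt_trans has hbs) (fun hh => addrLt_irrefl _ (h ▸ hh))
  · exact absurd (h.trans hbt) (InSDot_not_top haS)
  · exact addr_ext0 (by rw [ha0, hb0]) h

end Stmt10Aux
namespace Stmt10Aux

/-! ### Computation of itinerary entries -/

open scoped Classical in
/-- The itinerary entry determined by the position of a single point `t`. -/
noncomputable def posEntry (s : Addr) (t : Addr) : ItinEntry :=
  if t = topAddr then ItinEntry.star
  else if h : ∃ j : ℤ, t = consAddr ((j : ℝ) : Entry) s then ItinEntry.bdy h.choose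
  else if h : ∃ j : ℤ, addrLt (consAddr ((j : ℝ) : Entry) s) t ∧
      addrLt t (consAddr (((j + 1 : ℤ) : ℝ) : Entry) s) then ItinEntry.int h.choose
  else ItinEntry.star

lemma itin_eq_posEntry (s r : Addr) (k : ℕ) : itin s r k = posEntry s (shiftIter r k) := rfl

lemma itin_shift (s r : Addr) (m k : ℕ) :
    itin s (shiftIter r m) k = itin s r (k + m) := by
  rw [itin_eq_posEntry, itin_eq_posEntry, shiftIter_add]

lemma posEntry_star_of_top (s : Addr) : posEntry s topAddr = ItinEntry.star := by
  simp [posEntry]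

lemma posEntry_int_elim {s t : Addr} {j : ℤ} (h : posEntry s t = ItinEntry.int j) :
    sect s j t := by
  unfold posEntry at h
  split_ifs at h with h1 h2 h3
  have hj : h3.choose = j := by simpa using h
  rw [← hj]
  exact h3.choose_spec

lemma posEntry_bdy_elim {s t : Addr} {j : ℤ} (h : posEntry s t = ItinEntry.bdy j) :
    t = jS s j := by
  unfold posEntry at h
  split_ifs at h with h1 h2 h3
  have hj : h2.choose = j := by simpa using h
  rw [← hj]
  exact h2.choose_spec

lemma posEntry_of_sect {s t : Addr} {j : ℤ} (h : sect s j t) :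
    posEntry s t = ItinEntry.int j := by
  have hne : t ≠ topAddr := sect_ne_top h
  have hnb : ¬ ∃ j' : ℤ, t = consAddr ((j' : ℝ) : Entry) s := by
    rintro ⟨j', he⟩
    have h1 := h.1
    have h2 := h.2
    rw [he] at h1 h2
    have c1 := jS_lt_elim (j := j) (j' := j') h1
    have c2 := jS_lt_elim (j := j') (j' := j + 1) h2
    omega
  have hex : ∃ j' : ℤ, addrLt (consAddr ((j' : ℝ) : Entry) s) t ∧
      addrLt t (consAddr (((j' + 1 : ℤ) : ℝ) : Entry) s) := ⟨j, h⟩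
  unfold posEntry
  rw [if_neg hne, dif_neg hnb, dif_pos hex]
  exact congrArg ItinEntry.int (sect_disjoint hex.choose_spec h)

lemma posEntry_of_bdy {s : Addr} (j : ℤ) : posEntry s (jS s j) = ItinEntry.bdy j := by
  have hne : jS s j ≠ topAddr := jS_ne_top s j
  have hex : ∃ j' : ℤ, jS s j = consAddr ((j' : ℝ) : Entry) s := ⟨j, rfl⟩
  unfold posEntry
  rw [if_neg hne, dif_pos hex]
  refine congrArg ItinEntry.bdy ?_
  have h1 : jS s j = jS s hex.choose := hex.choose_spec
  have h0 : ((j : ℝ) : Entry) = ((hex.choose : ℝ) : Entry) := congrFun h1 0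
  have : (j : ℝ) = (hex.choose : ℝ) := by exact_mod_cast h0
  exact_mod_cast this.symm

lemma posEntry_not_star {s t : Addr} (h : InSDot t) : posEntry s t ≠ ItinEntry.star := by
  rcases mem_sect_or_bdy h s with ⟨j, hj⟩ | ⟨j, hj⟩
  · rw [hj, posEntry_of_bdy]; simp
  · rw [posEntry_of_sect hj]; simp

lemma itin_star_elim {s r : Addr} {k : ℕ} (hr : InSDot r) (h : itin s r k = ItinEntry.star) :
    shiftIter r k = topAddr := by
  by_contra hc
  rw [itin_eq_posEntry] at h
  exact posEntry_not_star (InSDot_shiftIter hr k hc) h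

lemma itin_star_of_top {s r : Addr} {k : ℕ} (h : shiftIter r k = topAddr) :
    itin s r k = ItinEntry.star := by
  rw [itin_eq_posEntry, h, posEntry_star_of_top]

lemma itin_int_elim {s r : Addr} {k : ℕ} {j : ℤ} (h : itin s r k = ItinEntry.int j) :
    sect s j (shiftIter r k) := posEntry_int_elim (by rwa [itin_eq_posEntry] at h)

lemma itin_bdy_elim {s r : Addr} {k : ℕ} {j : ℤ} (h : itin s r k = ItinEntry.bdy j) :
    shiftIter r k = jS s j := posEntry_bdy_elim (by rwa [itin_eq_posEntry] at h)

lemma itin_of_sect {s r : Addr} {k : ℕ} {j : ℤ} (h : sect s j (shiftIter r k)) :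
    itin s r k = ItinEntry.int j := by
  rw [itin_eq_posEntry]; exact posEntry_of_sect h

/-! ### Entry order -/

lemma entry_lt_irrefl (e : ItinEntry) : ¬ ItinEntry.Lt e e := by
  cases e <;> simp [ItinEntry.Lt] <;> omega

lemma entry_lt_asymm {e e' : ItinEntry} (h : ItinEntry.Lt e e') (h' : ItinEntry.Lt e' e) :
    False := by
  cases e <;> cases e' <;> simp [ItinEntry.Lt] at h h' <;> omega

/-! ### Cyclic order -/

def cyc (a b c : Addr) : Prop :=
  (addrLt a b ∧ addrLt b c) ∨ (addrLt b c ∧ addrLt c a) ∨ (addrLt c a ∧ addrLt a b)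

lemma cyc_rot {a b c : Addr} (h : cyc a b c) : cyc b c a := by
  unfold cyc at *; tauto

lemma cyc_top_elim {a b : Addr} (h : cyc topAddr a b) : addrLt a b := by
  rcases h with ⟨h1, h2⟩ | ⟨h1, h2⟩ | ⟨h1, h2⟩
  · exact absurd h1 (not_addrLt_top a)
  · exact h1
  · exact absurd h2 (not_addrLt_top a)

end Stmt10Aux
namespace Stmt10Aux

lemma entryR_le {x y : ℝ} (h : ((x : ℝ) : Entry) ≤ ((y : ℝ) : Entry)) : x ≤ y := by
  exact_mod_cast h

lemma sorted_step {s x y z : Addr} {j : ℤ} (hx : InSDot x) (hy : InSDot y) (hz : InSDot z)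
    (hxj : sect s j x) (hyj : sect s j y) (hzj : sect s j z)
    (hxy : addrLt x y) (hyz : addrLt y z) :
    cyc (shiftIter x 1) (shiftIter y 1) (shiftIter z 1) := by
  rcases class_of_sect hx hxj with ⟨hx0, hxs, hxS⟩ | ⟨hx0, hxt⟩ | ⟨hx0, hxs, hxS⟩ <;>
    rcases class_of_sect hy hyj with ⟨hy0, hys, hyS⟩ | ⟨hy0, hyt⟩ | ⟨hy0, hys, hyS⟩ <;>
      rcases class_of_sect hz hzj with ⟨hz0, hzs, hzS⟩ | ⟨hz0, hzt⟩ | ⟨hz0, hzs, hzS⟩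
  -- AAA
  · exact Or.inl ⟨addrLt_shift_of (by rw [hx0, hy0]) hxy, addrLt_shift_of (by rw [hy0, hz0]) hyz⟩
  -- AAB
  · refine Or.inl ⟨addrLt_shift_of (by rw [hx0, hy0]) hxy, ?_⟩
    rw [hzt]; exact addrLt_top (InSDot_not_top hyS)
  -- AAC
  · exact Or.inr (Or.inr ⟨addrLt_trans hzs hxs, addrLt_shift_of (by rw [hx0, hy0]) hxy⟩)
  -- ABA
  · have h := addrLt_e0_le hyz; rw [hy0, hz0] at h; have := entryR_le h; linarith
  -- ABB
  · have hyz' : y = z := addr_ext0 (hy0.trans hz0.symm) (hyt.trans hzt.symm)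
    rw [hyz'] at hyz; exact absurd hyz (addrLt_irrefl z)
  -- ABC
  · refine Or.inr (Or.inr ⟨addrLt_trans hzs hxs, ?_⟩)
    rw [hyt]; exact addrLt_top (InSDot_not_top hxS)
  -- ACA
  · have h := addrLt_e0_le hyz; rw [hy0, hz0] at h; have := entryR_le h; linarith
  -- ACB
  · have h := addrLt_e0_le hyz; rw [hy0, hz0] at h; have := entryR_le h; linarith
  -- ACC
  · exact Or.inr (Or.inl ⟨addrLt_shift_of (by rw [hy0, hz0]) hyz, addrLt_trans hzs hxs⟩)
  -- BAA
  · have h := addrLt_e0_le hxy; rw [hx0, hy0] at h; have := entryR_le h; linarith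
  -- BAB
  · have h := addrLt_e0_le hxy; rw [hx0, hy0] at h; have := entryR_le h; linarith
  -- BAC
  · have h := addrLt_e0_le hxy; rw [hx0, hy0] at h; have := entryR_le h; linarith
  -- BBA
  · have hxy' : x = y := addr_ext0 (hx0.trans hy0.symm) (hxt.trans hyt.symm)
    rw [hxy'] at hxy; exact absurd hxy (addrLt_irrefl y)
  -- BBB
  · have hxy' : x = y := addr_ext0 (hx0.trans hy0.symm) (hxt.trans hyt.symm)
    rw [hxy'] at hxy; exact absurd hxy (addrLt_irrefl y)
  -- BBC
  · have hxy' : x = y := addr_ext0 (hx0.trans hy0.symm) (hxt.trans hyt.symm)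
    rw [hxy'] at hxy; exact absurd hxy (addrLt_irrefl y)
  -- BCA
  · have h := addrLt_e0_le hyz; rw [hy0, hz0] at h; have := entryR_le h; linarith
  -- BCB
  · have h := addrLt_e0_le hyz; rw [hy0, hz0] at h; have := entryR_le h; linarith
  -- BCC
  · refine Or.inr (Or.inl ⟨addrLt_shift_of (by rw [hy0, hz0]) hyz, ?_⟩)
    rw [hxt]; exact addrLt_top (InSDot_not_top hzS)
  -- CAA
  · have h := addrLt_e0_le hxy; rw [hx0, hy0] at h; have := entryR_le h; linarith
  -- CAB
  · have h := addrLt_e0_le hxy; rw [hx0, hy0] at h; have := entryR_le h; linarith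
  -- CAC
  · have h := addrLt_e0_le hxy; rw [hx0, hy0] at h; have := entryR_le h; linarith
  -- CBA
  · have h := addrLt_e0_le hxy; rw [hx0, hy0] at h; have := entryR_le h; linarith
  -- CBB
  · have h := addrLt_e0_le hxy; rw [hx0, hy0] at h; have := entryR_le h; linarith
  -- CBC
  · have h := addrLt_e0_le hxy; rw [hx0, hy0] at h; have := entryR_le h; linarith
  -- CCA
  · have h := addrLt_e0_le hyz; rw [hy0, hz0] at h; have := entryR_le h; linarith
  -- CCB
  · have h := addrLt_e0_le hyz; rw [hy0, hz0] at h; have := entryR_le h; linarith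
  -- CCC
  · exact Or.inl ⟨addrLt_shift_of (by rw [hx0, hy0]) hxy, addrLt_shift_of (by rw [hy0, hz0]) hyz⟩

lemma cyc_step {s x y z : Addr} {j : ℤ} (hx : InSDot x) (hy : InSDot y) (hz : InSDot z)
    (hxj : sect s j x) (hyj : sect s j y) (hzj : sect s j z)
    (hc : cyc x y z) (dxy : x ≠ y) (dxz : x ≠ z) (dyz : y ≠ z) :
    cyc (shiftIter x 1) (shiftIter y 1) (shiftIter z 1) ∧
      shiftIter x 1 ≠ shiftIter y 1 ∧ shiftIter x 1 ≠ shiftIter z 1 ∧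
      shiftIter y 1 ≠ shiftIter z 1 := by
  refine ⟨?_, fun h => dxy (sect_shift_inj hx hy hxj hyj h),
    fun h => dxz (sect_shift_inj hx hz hxj hzj h),
    fun h => dyz (sect_shift_inj hy hz hyj hzj h)⟩
  rcases hc with ⟨h1, h2⟩ | ⟨h1, h2⟩ | ⟨h1, h2⟩
  · exact sorted_step hx hy hz hxj hyj hzj h1 h2
  · exact cyc_rot (cyc_rot (sorted_step hy hz hx hyj hzj hxj h1 h2))
  · exact cyc_rot (sorted_step hz hx hy hzj hxj hyj h1 h2)

lemma bottom_step {s a b : Addr} {j : ℤ} (ha : InSDot a) (hb : InSDot b)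
    (hja : sect s j a) (hjb : sect s j b) (hab : addrLt a b) (hsne : s ≠ topAddr) :
    cyc s (shiftIter a 1) (shiftIter b 1) ∧ s ≠ shiftIter a 1 ∧ s ≠ shiftIter b 1 ∧
      shiftIter a 1 ≠ shiftIter b 1 := by
  rcases class_of_sect ha hja with ⟨ha0, has, haS⟩ | ⟨ha0, hat⟩ | ⟨ha0, has, haS⟩ <;>
    rcases class_of_sect hb hjb with ⟨hb0, hbs, hbS⟩ | ⟨hb0, hbt⟩ | ⟨hb0, hbs, hbS⟩
  -- AA
  · have mab := addrLt_shift_of (by rw [ha0, hb0]) hab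
    exact ⟨Or.inl ⟨has, mab⟩, addrLt_ne has, addrLt_ne (addrLt_trans has mab), addrLt_ne mab⟩
  -- AB
  · refine ⟨Or.inl ⟨has, ?_⟩, addrLt_ne has, ?_, ?_⟩
    · rw [hbt]; exact addrLt_top (InSDot_not_top haS)
    · rw [hbt]; exact hsne
    · rw [hbt]; exact InSDot_not_top haS
  -- AC
  · exact ⟨Or.inr (Or.inr ⟨hbs, has⟩), addrLt_ne has, (addrLt_ne hbs).symm,
      (addrLt_ne (addrLt_trans hbs has)).symm⟩
  -- BA
  · have h := addrLt_e0_le hab; rw [ha0, hb0] at h; have := entryR_le h; linarith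
  -- BB
  · have hab' : a = b := addr_ext0 (ha0.trans hb0.symm) (hat.trans hbt.symm)
    rw [hab'] at hab; exact absurd hab (addrLt_irrefl b)
  -- BC
  · refine ⟨Or.inr (Or.inr ⟨hbs, ?_⟩), ?_, (addrLt_ne hbs).symm, ?_⟩
    · rw [hat]; exact addrLt_top hsne
    · rw [hat]; exact hsne
    · rw [hat]; exact (InSDot_not_top hbS).symm
  -- CA
  · have h := addrLt_e0_le hab; rw [ha0, hb0] at h; have := entryR_le h; linarith
  -- CB
  · have h := addrLt_e0_le hab; rw [ha0, hb0] at h; have := entryR_le h; linarith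
  -- CC
  · have mab := addrLt_shift_of (by rw [ha0, hb0]) hab
    exact ⟨Or.inr (Or.inl ⟨mab, hbs⟩), (addrLt_ne (addrLt_trans mab hbs)).symm,
      (addrLt_ne hbs).symm, addrLt_ne mab⟩

lemma posEntry_mono {s a b : Addr} (ha : InSDot a) (hb : InSDot b) (hab : addrLt a b) :
    (∃ j, sect s j a ∧ sect s j b) ∨ ItinEntry.Lt (posEntry s a) (posEntry s b) := by
  rcases mem_sect_or_bdy ha s with ⟨j, hj⟩ | ⟨j, hj⟩ <;>
    rcases mem_sect_or_bdy hb s with ⟨j', hj'⟩ | ⟨j', hj'⟩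
  · right
    rw [hj, hj', posEntry_of_bdy, posEntry_of_bdy]
    show j < j'
    rw [hj, hj'] at hab
    exact jS_lt_elim hab
  · right
    rw [hj, posEntry_of_bdy, posEntry_of_sect hj']
    show j ≤ j'
    by_contra hc
    push_neg at hc
    rw [hj] at hab
    exact addrLt_asymm hab (addrLt_of_lt_of_le hj'.2 (jS_le (by omega)))
  · right
    rw [posEntry_of_sect hj, hj', posEntry_of_bdy]
    show j ≤ j' - 1
    rw [hj'] at hab
    have := jS_lt_elim (addrLt_trans hj.1 hab)
    omega
  · rcases eq_or_ne j j' with rfl | hne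
    · exact Or.inl ⟨j, hj, hj'⟩
    · right
      rw [posEntry_of_sect hj, posEntry_of_sect hj']
      show j < j'
      rcases lt_or_gt_of_ne hne with h | h
      · exact h
      · exact absurd (addrLt_trans (addrLt_of_lt_of_le hj'.2 (jS_le (by omega : j' + 1 ≤ j)))
          (addrLt_trans hj.1 hab)) (addrLt_irrefl b)

end Stmt10Aux
namespace Stmt10Aux

/-! ### Facts about the intermediate address `s` and the interval `I` -/

section Main

variable {n : ℕ} {s : Addr} {u : ℕ → ℤ} {sm sp : Addr} {I : Set Addr}

lemma s_ne_top (hn : 2 ≤ n) (hs : IsIntermediate s n) : s ≠ topAddr :=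
  InSDot_not_top (Or.inr ⟨n, hn, hs⟩)

lemma InSDot_s (hn : 2 ≤ n) (hs : IsIntermediate s n) : InSDot s := Or.inr ⟨n, hn, hs⟩

lemma s_shift_inSDot (hs : IsIntermediate s n) {m : ℕ} (hm : m + 2 ≤ n) :
    InSDot (shiftIter s m) := by
  refine Or.inr ⟨n - m, by omega, by omega, fun k hk => hs.2.1 (k+m) (by omega),
    fun k hk => hs.2.2.1 (k+m) (by omega), fun k hk => hs.2.2.2 (k+m) (by omega)⟩

lemma s_top (hs : IsIntermediate s n) : shiftIter s (n-1) = topAddr :=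
  funext fun j => hs.2.2.2 (j + (n-1)) (by omega)

lemma s_sect (hK : itin s s = finWord u n) {k : ℕ} (hk : k + 1 < n) :
    sect s (u k) (shiftIter s k) := by
  refine itin_int_elim (j := u k) ?_
  rw [hK]
  simp [finWord, hk]

lemma s_half (hs : IsIntermediate s n) {m : ℕ} (hm : m + 2 = n) :
    ∃ c : ℤ, (shiftIter s m) 0 = (((c : ℝ) + 1/2 : ℝ) : Entry) := by
  obtain ⟨c, hc⟩ := hs.2.2.1 m hm
  exact ⟨c, by rw [shiftIter_apply]; simpa using hc⟩

lemma I_ne_top (hn : 2 ≤ n) (hs : IsIntermediate s n) (hsp : InSDot sp)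
    (hI : I = {a | addrLe sm a ∧ addrLe a s} ∨ I = {a | addrLe s a ∧ addrLe a sp})
    {x : Addr} (hx : x ∈ I) : x ≠ topAddr := by
  rintro rfl
  rcases hI with rfl | rfl
  · rcases hx.2 with h | h
    · exact not_addrLt_top s h
    · exact s_ne_top hn hs h.symm
  · rcases hx.2 with h | h
    · exact not_addrLt_top sp h
    · exact InSDot_not_top hsp h.symm

lemma I_mem_le (hlt1 : addrLt sm s) (hlt2 : addrLt s sp)
    (hI : I = {a | addrLe sm a ∧ addrLe a s} ∨ I = {a | addrLe s a ∧ addrLe a sp})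
    {x : Addr} (hx : x ∈ I) : addrLe sm x ∧ addrLe x sp := by
  rcases hI with rfl | rfl
  · exact ⟨hx.1, addrLe_trans hx.2 (Or.inl hlt2)⟩
  · exact ⟨addrLe_trans (Or.inl hlt1) hx.1, hx.2⟩

lemma not_between_sI
    (hI : I = {a | addrLe sm a ∧ addrLe a s} ∨ I = {a | addrLe s a ∧ addrLe a sp})
    {x y : Addr} (hx : x ∈ I) (hy : y ∈ I) (h1 : addrLt x s) (h2 : addrLt s y) : False := by
  rcases hI with rfl | rfl
  · exact addrLt_irrefl s (addrLt_of_lt_of_le h2 hy.2)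
  · exact addrLt_irrefl s (addrLt_of_le_of_lt hx.1 h1)

lemma lt_of_cyc_sI
    (hI : I = {a | addrLe sm a ∧ addrLe a s} ∨ I = {a | addrLe s a ∧ addrLe a sp})
    {x y : Addr} (hc : cyc s x y) (hx : x ∈ I) (hy : y ∈ I) (hxs : x ≠ s) (hys : y ≠ s) :
    addrLt x y := by
  rcases hI with rfl | rfl
  · have hx' : addrLt x s := addrLt_of_le_ne hx.2 hxs
    have hy' : addrLt y s := addrLt_of_le_ne hy.2 hys
    rcases hc with ⟨h1, h2⟩ | ⟨h1, h2⟩ | ⟨h1, h2⟩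
    · exact absurd h1 (fun h => addrLt_asymm h hx')
    · exact h1
    · exact absurd h2 (fun h => addrLt_asymm h hx')
  · have hx' : addrLt s x := addrLt_of_le_ne hx.1 (Ne.symm hxs)
    have hy' : addrLt s y := addrLt_of_le_ne hy.1 (Ne.symm hys)
    rcases hc with ⟨h1, h2⟩ | ⟨h1, h2⟩ | ⟨h1, h2⟩
    · exact h2
    · exact h1
    · exact absurd h1 (fun h => addrLt_asymm h hy')

lemma cyc_seed
    (hI : I = {a | addrLe sm a ∧ addrLe a s} ∨ I = {a | addrLe s a ∧ addrLe a sp})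
    {x y : Addr} (hx : x ∈ I) (hy : y ∈ I) (hxs : x ≠ s) (hys : y ≠ s)
    (hxy : addrLt x y) : cyc s x y := by
  rcases hI with rfl | rfl
  · exact Or.inr (Or.inl ⟨hxy, addrLt_of_le_ne hy.2 hys⟩)
  · exact Or.inl ⟨addrLt_of_le_ne hx.1 (Ne.symm hxs), hxy⟩

/-! ### The pair hypotheses -/

/-- The orbit condition from the theorem. -/
def OrbOK (s : Addr) (u : ℕ → ℤ) (n : ℕ) (I : Set Addr) (r : Addr) : Prop :=
  ∀ j : ℕ, shiftDef r (j * n) → shiftIter r (j * n) ∈ I ∧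
    ∀ i, i + 1 < n → itin s (shiftIter r (j * n)) i = ItinEntry.int (u i)

lemma orb_itin {r : Addr} (h : OrbOK s u n I r) : ∀ i, i + 1 < n →
    itin s r i = ItinEntry.int (u i) := by
  intro i hi
  have hd : shiftDef r (0 * n) := by
    intro j hj; rw [Nat.zero_mul] at hj; exact absurd hj (Nat.not_lt_zero j)
  have h0 := (h 0 hd).2 i hi
  rwa [Nat.zero_mul, shiftIter_zero] at h0

lemma orb_mem {r : Addr} (h : OrbOK s u n I r) : r ∈ I := by
  have hd : shiftDef r (0 * n) := by
    intro j hj; rw [Nat.zero_mul] at hj; exact absurd hj (Nat.not_lt_zero j)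
  have h0 := (h 0 hd).1
  rwa [Nat.zero_mul, shiftIter_zero] at h0

/-- All the hypotheses on an ordered pair of points of `I`. -/
def Hpair (s : Addr) (u : ℕ → ℤ) (n : ℕ) (I : Set Addr) (r r' : Addr) : Prop :=
  InSDot r ∧ InSDot r' ∧ r ∈ I ∧ r' ∈ I ∧ r ≠ s ∧ r' ≠ s ∧
    OrbOK s u n I r ∧ OrbOK s u n I r' ∧ addrLt r r'

/-! ### The cyclic-order chain along one period -/

lemma chain (hn : 2 ≤ n) (hs : IsIntermediate s n) (hK : itin s s = finWord u n)
    (hI : I = {a | addrLe sm a ∧ addrLe a s} ∨ I = {a | addrLe s a ∧ addrLe a sp})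
    {r r' : Addr} (H : Hpair s u n I r r') :
    ∀ k, k ≤ n - 1 →
      cyc (shiftIter s k) (shiftIter r k) (shiftIter r' k) ∧
      shiftIter s k ≠ shiftIter r k ∧ shiftIter s k ≠ shiftIter r' k ∧
      shiftIter r k ≠ shiftIter r' k := by
  obtain ⟨hr, hr', hrI, hr'I, hrs, hr's, ho, ho', hlt⟩ := H
  intro k
  induction k with
  | zero =>
    intro _
    simp only [shiftIter_zero]
    exact ⟨cyc_seed hI hrI hr'I hrs hr's hlt, Ne.symm hrs, Ne.symm hr's, addrLt_ne hlt⟩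
  | succ k ih =>
    intro hk1
    have hk : k + 1 < n := by omega
    obtain ⟨hc, d1, d2, d3⟩ := ih (by omega)
    have hss : sect s (u k) (shiftIter s k) := s_sect hK hk
    have hsr : sect s (u k) (shiftIter r k) := itin_int_elim (orb_itin ho k hk)
    have hsr' : sect s (u k) (shiftIter r' k) := itin_int_elim (orb_itin ho' k hk)
    have hS1 : InSDot (shiftIter s k) := s_shift_inSDot hs (by omega)
    have hS2 : InSDot (shiftIter r k) := InSDot_shiftIter hr k (sect_ne_top hsr)
    have hS3 : InSDot (shiftIter r' k) := InSDot_shiftIter hr' k (sect_ne_top hsr')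
    have := cyc_step hS1 hS2 hS3 hss hsr hsr' hc d1 d2 d3
    rw [shiftIter_succ s, shiftIter_succ r, shiftIter_succ r']
    exact this

/-! ### Transport over one full period -/

lemma period (hn : 2 ≤ n) (hs : IsIntermediate s n) (hK : itin s s = finWord u n)
    (hsp : InSDot sp) (hlt1 : addrLt sm s) (hlt2 : addrLt s sp)
    (hI : I = {a | addrLe sm a ∧ addrLe a s} ∨ I = {a | addrLe s a ∧ addrLe a sp})
    {r r' : Addr} (H : Hpair s u n I r r') :
    ItinEntry.Lt (itin s r (n-1)) (itin s r' (n-1)) ∨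
      ((∀ i, i < n → itin s r i = itin s r' i) ∧
        Hpair s u n I (shiftIter r n) (shiftIter r' n)) := by
  obtain ⟨hc, d1, d2, d3⟩ := chain hn hs hK hI H (n-1) le_rfl
  obtain ⟨hr, hr', hrI, hr'I, hrs, hr's, ho, ho', hltp⟩ := H
  rw [s_top hs] at hc d1 d2
  have hab : addrLt (shiftIter r (n-1)) (shiftIter r' (n-1)) := cyc_top_elim hc
  have haT : shiftIter r (n-1) ≠ topAddr := fun h => d1 h.symm
  have hbT : shiftIter r' (n-1) ≠ topAddr := fun h => d2 h.symm
  have ha : InSDot (shiftIter r (n-1)) := InSDot_shiftIter hr _ haT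
  have hb : InSDot (shiftIter r' (n-1)) := InSDot_shiftIter hr' _ hbT
  rcases posEntry_mono (s := s) ha hb hab with ⟨j, hja, hjb⟩ | hLt
  · right
    have er : itin s r (n-1) = ItinEntry.int j := itin_of_sect hja
    have er' : itin s r' (n-1) = ItinEntry.int j := itin_of_sect hjb
    have heq : ∀ i, i < n → itin s r i = itin s r' i := by
      intro i hi
      rcases Nat.lt_or_ge i (n-1) with h | h
      · rw [orb_itin ho i (by omega), orb_itin ho' i (by omega)]
      · have : i = n - 1 := by omega
        rw [this, er, er']
    refine ⟨heq, ?_⟩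
    -- the shifted pair
    have hn1 : 1 + (n - 1) = n := by omega
    have hrw : shiftIter (shiftIter r (n-1)) 1 = shiftIter r n := by
      rw [shiftIter_add, hn1]
    have hrw' : shiftIter (shiftIter r' (n-1)) 1 = shiftIter r' n := by
      rw [shiftIter_add, hn1]
    obtain ⟨hcyc, e1, e2, e3⟩ := bottom_step ha hb hja hjb hab (s_ne_top hn hs)
    rw [hrw] at hcyc e1 e3
    rw [hrw'] at hcyc e2 e3
    have hDef : shiftDef r n := by
      intro k hk
      rcases Nat.lt_or_ge k (n-1) with h | h
      · exact sect_ne_top (itin_int_elim (orb_itin ho k (by omega)))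
      · have : k = n - 1 := by omega
        rw [this]; exact haT
    have hDef' : shiftDef r' n := by
      intro k hk
      rcases Nat.lt_or_ge k (n-1) with h | h
      · exact sect_ne_top (itin_int_elim (orb_itin ho' k (by omega)))
      · have : k = n - 1 := by omega
        rw [this]; exact hbT
    have hmem : shiftIter r n ∈ I := by
      have := (ho 1 (by rwa [Nat.one_mul])).1
      rwa [Nat.one_mul] at this
    have hmem' : shiftIter r' n ∈ I := by
      have := (ho' 1 (by rwa [Nat.one_mul])).1
      rwa [Nat.one_mul] at this
    have horb2 : OrbOK s u n I (shiftIter r n) := by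
      intro j' hd
      have hmul : (j'+1) * n = j' * n + n := by rw [add_mul, one_mul]
      have key : shiftIter (shiftIter r n) (j' * n) = shiftIter r ((j'+1) * n) := by
        rw [shiftIter_add, hmul]
      have hd2 : shiftDef r ((j'+1) * n) := by
        intro k hk
        rcases Nat.lt_or_ge k n with h | h
        · exact hDef k h
        · have hrk : shiftIter r k = shiftIter (shiftIter r n) (k - n) := by
            rw [shiftIter_add, (by omega : k - n + n = k)]
          rw [hrk]
          rw [hmul] at hk
          exact hd (k - n) (by omega)
      have := ho (j'+1) hd2
      rw [← key] at this
      exact this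
    have horb2' : OrbOK s u n I (shiftIter r' n) := by
      intro j' hd
      have hmul : (j'+1) * n = j' * n + n := by rw [add_mul, one_mul]
      have key : shiftIter (shiftIter r' n) (j' * n) = shiftIter r' ((j'+1) * n) := by
        rw [shiftIter_add, hmul]
      have hd2 : shiftDef r' ((j'+1) * n) := by
        intro k hk
        rcases Nat.lt_or_ge k n with h | h
        · exact hDef' k h
        · have hrk : shiftIter r' k = shiftIter (shiftIter r' n) (k - n) := by
            rw [shiftIter_add, (by omega : k - n + n = k)]
          rw [hrk]
          rw [hmul] at hk
          exact hd (k - n) (by omega)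
      have := ho' (j'+1) hd2
      rw [← key] at this
      exact this
    exact ⟨InSDot_shiftIter hr n (I_ne_top hn hs hsp hI hmem),
      InSDot_shiftIter hr' n (I_ne_top hn hs hsp hI hmem'),
      hmem, hmem', Ne.symm e1, Ne.symm e2,
      horb2, horb2', lt_of_cyc_sI hI hcyc hmem hmem' (Ne.symm e1) (Ne.symm e2)⟩
  · left
    rw [itin_eq_posEntry s r, itin_eq_posEntry s r']
    exact hLt

end Main

end Stmt10Aux
namespace Stmt10Aux

section Main2

variable {n : ℕ} {s : Addr} {u : ℕ → ℤ} {sm sp : Addr} {I : Set Addr}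

lemma ord_aux (hn : 2 ≤ n) (hs : IsIntermediate s n) (hK : itin s s = finWord u n)
    (hsp : InSDot sp) (hlt1 : addrLt sm s) (hlt2 : addrLt s sp)
    (hI : I = {a | addrLe sm a ∧ addrLe a s} ∨ I = {a | addrLe s a ∧ addrLe a sp}) :
    ∀ K : ℕ, ∀ r r' : Addr, Hpair s u n I r r' →
      (∀ i, i < K → itin s r i = itin s r' i) →
      ¬ ItinEntry.Lt (itin s r' K) (itin s r K) := by
  intro K
  induction K using Nat.strong_induction_on with
  | _ K IH =>
    intro r r' H hpre hbad
    rcases period hn hs hK hsp hlt1 hlt2 hI H with hLt | ⟨heq, H'⟩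
    · rcases Nat.lt_trichotomy K (n-1) with h | h | h
      · have e1 : itin s r K = ItinEntry.int (u K) :=
          orb_itin H.2.2.2.2.2.2.1 K (by omega)
        have e2 : itin s r' K = ItinEntry.int (u K) :=
          orb_itin H.2.2.2.2.2.2.2.1 K (by omega)
        rw [e1, e2] at hbad
        exact entry_lt_irrefl _ hbad
      · rw [h] at hbad
        exact entry_lt_asymm hLt hbad
      · have hh := hpre (n-1) (by omega)
        rw [hh] at hLt
        exact entry_lt_irrefl _ hLt
    · rcases Nat.lt_or_ge K n with h | h
      · have hh := heq K h
        rw [hh] at hbad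
        exact entry_lt_irrefl _ hbad
      · refine IH (K - n) (by omega) (shiftIter r n) (shiftIter r' n) H' ?_ ?_
        · intro i hi
          rw [itin_shift, itin_shift]
          exact hpre (i + n) (by omega)
        · rw [itin_shift, itin_shift, (by omega : K - n + n = K)]
          exact hbad

/-- Shifting the orbit condition by one period. -/
lemma orb_shift {r : Addr} (ho : OrbOK s u n I r) (hDef : shiftDef r n) :
    OrbOK s u n I (shiftIter r n) := by
  intro j' hd
  have hmul : (j'+1) * n = j' * n + n := by rw [add_mul, one_mul]
  have key : shiftIter (shiftIter r n) (j' * n) = shiftIter r ((j'+1) * n) := by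
    rw [shiftIter_add, hmul]
  have hd2 : shiftDef r ((j'+1) * n) := by
    intro k hk
    rcases Nat.lt_or_ge k n with h | h
    · exact hDef k h
    · have hrk : shiftIter r k = shiftIter (shiftIter r n) (k - n) := by
        rw [shiftIter_add, (by omega : k - n + n = k)]
      rw [hrk]
      rw [hmul] at hk
      exact hd (k - n) (by omega)
  have := ho (j'+1) hd2
  rw [← key] at this
  exact this

end Main2

end Stmt10Aux
namespace Stmt10Aux

section Main3

variable {n : ℕ} {s : Addr} {u : ℕ → ℤ} {sm sp : Addr} {I : Set Addr}

lemma real_eq_half_false {p q : ℤ} (h : (p : ℝ) = (q : ℝ) + 1/2) : False := by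
  have h2 : ((2*p : ℤ) : ℝ) = ((2*q+1 : ℤ) : ℝ) := by push_cast; linarith
  have h3 : (2*p : ℤ) = 2*q+1 := by exact_mod_cast h2
  omega

/-- `w` lies strictly between `a` and `b` (in either order). -/
def sb (w a b : Addr) : Prop :=
  (addrLt a w ∧ addrLt w b) ∨ (addrLt b w ∧ addrLt w a)

lemma push_core (hn : 2 ≤ n) (hs : IsIntermediate s n)
    {r r' : Addr} (hr : InSDot r) (hr' : InSDot r') (heq : itin s r = itin s r')
    {p m : ℕ} (hm : m + 2 ≤ n)
    (hw1 : addrLt (shiftIter r p) (shiftIter s m))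
    (hw2 : addrLt (shiftIter s m) (shiftIter r' p)) :
    ∃ m', m' + 2 ≤ n ∧ sb (shiftIter s m') (shiftIter r (p+1)) (shiftIter r' (p+1)) := by
  have sra : shiftIter r (p+1) = shiftIter (shiftIter r p) 1 := shiftIter_succ r p
  have srb : shiftIter r' (p+1) = shiftIter (shiftIter r' p) 1 := shiftIter_succ r' p
  have srw : shiftIter s (m+1) = shiftIter (shiftIter s m) 1 := shiftIter_succ s m
  cases he : itin s r p with
  | star =>
    have h1 := itin_star_elim hr he
    rw [h1] at hw1
    exact absurd hw1 (not_addrLt_top _)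
  | bdy j =>
    have he' : itin s r' p = ItinEntry.bdy j := by rw [← congrFun heq p]; exact he
    have h1 := itin_bdy_elim he
    have h2 := itin_bdy_elim he'
    rw [h1] at hw1
    rw [h2] at hw2
    exact absurd (addrLt_trans hw2 hw1) (addrLt_irrefl _)
  | int j =>
    have he' : itin s r' p = ItinEntry.int j := by rw [← congrFun heq p]; exact he
    have hja : sect s j (shiftIter r p) := itin_int_elim he
    have hjb : sect s j (shiftIter r' p) := itin_int_elim he'
    have hjw : sect s j (shiftIter s m) := ⟨addrLt_trans hja.1 hw1, addrLt_trans hw2 hjb.2⟩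
    have hA : InSDot (shiftIter r p) := InSDot_shiftIter hr p (sect_ne_top hja)
    have hB : InSDot (shiftIter r' p) := InSDot_shiftIter hr' p (sect_ne_top hjb)
    have hW : InSDot (shiftIter s m) := s_shift_inSDot hs hm
    rcases class_of_sect hA hja with ⟨ha0, has, haS⟩ | ⟨ha0, hat⟩ | ⟨ha0, has, haS⟩ <;>
      rcases class_of_sect hB hjb with ⟨hb0, hbs, hbS⟩ | ⟨hb0, hbt⟩ | ⟨hb0, hbs, hbS⟩
    -- (A,A)
    · rcases class_of_sect hW hjw with ⟨hw0, hws, hwS⟩ | ⟨hw0, hwt⟩ | ⟨hw0, hws, hwS⟩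
      · have hb2 : m + 1 + 2 ≤ n := by
          rcases eq_or_lt_of_le hm with hmeq | hmlt
          · exfalso
            obtain ⟨c, hc⟩ := s_half hs hmeq
            rw [hw0] at hc
            have : (j : ℝ) = (c : ℝ) + 1/2 := by exact_mod_cast hc
            exact real_eq_half_false this
          · omega
        refine ⟨m+1, hb2, Or.inl ⟨?_, ?_⟩⟩
        · rw [sra, srw]; exact addrLt_shift_of (by rw [ha0, hw0]) hw1
        · rw [srb, srw]; exact addrLt_shift_of (by rw [hw0, hb0]) hw2
      · have h := addrLt_e0_le hw2; rw [hw0, hb0] at h; have := entryR_le h; linarith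
      · have h := addrLt_e0_le hw2; rw [hw0, hb0] at h; have := entryR_le h; linarith
    -- (A,B)
    · exfalso
      have hstar : itin s r' (p+1) = ItinEntry.star := itin_star_of_top (by rw [srb]; exact hbt)
      have hstar' : itin s r (p+1) = ItinEntry.star := by rw [congrFun heq (p+1)]; exact hstar
      have h3 := itin_star_elim hr hstar'
      rw [sra] at h3
      exact InSDot_not_top haS h3
    -- (A,C)
    · refine ⟨0, by omega, ?_⟩
      rw [shiftIter_zero, sra, srb]
      exact Or.inr ⟨hbs, has⟩
    -- (B,A)
    · exfalso
      have hstar' : itin s r (p+1) = ItinEntry.star := itin_star_of_top (by rw [sra]; exact hat)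
      have hstar : itin s r' (p+1) = ItinEntry.star := by rw [← congrFun heq (p+1)]; exact hstar'
      have h3 := itin_star_elim hr' hstar
      rw [srb] at h3
      exact InSDot_not_top hbS h3
    -- (B,B)
    · exfalso
      have hab' : shiftIter r p = shiftIter r' p :=
        addr_ext0 (ha0.trans hb0.symm) (hat.trans hbt.symm)
      rw [hab'] at hw1
      exact addrLt_asymm hw1 hw2
    -- (B,C)
    · exfalso
      have hstar' : itin s r (p+1) = ItinEntry.star := itin_star_of_top (by rw [sra]; exact hat)
      have hstar : itin s r' (p+1) = ItinEntry.star := by rw [← congrFun heq (p+1)]; exact hstar'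
      have h3 := itin_star_elim hr' hstar
      rw [srb] at h3
      exact InSDot_not_top hbS h3
    -- (C,A)
    · have h := addrLt_e0_le (addrLt_trans hw1 hw2); rw [ha0, hb0] at h
      have := entryR_le h; linarith
    -- (C,B)
    · have h := addrLt_e0_le (addrLt_trans hw1 hw2); rw [ha0, hb0] at h
      have := entryR_le h; linarith
    -- (C,C)
    · rcases class_of_sect hW hjw with ⟨hw0, hws, hwS⟩ | ⟨hw0, hwt⟩ | ⟨hw0, hws, hwS⟩
      · have h := addrLt_e0_le hw1; rw [ha0, hw0] at h; have := entryR_le h; linarith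
      · have h := addrLt_e0_le hw1; rw [ha0, hw0] at h; have := entryR_le h; linarith
      · have hb2 : m + 1 + 2 ≤ n := by
          rcases eq_or_lt_of_le hm with hmeq | hmlt
          · exfalso
            obtain ⟨c, hc⟩ := s_half hs hmeq
            rw [hw0] at hc
            have hcc : (j : ℝ) + 1 = (c : ℝ) + 1/2 := by exact_mod_cast hc
            have h2 : ((j+1 : ℤ) : ℝ) = (c : ℝ) + 1/2 := by push_cast; linarith
            exact real_eq_half_false h2
          · omega
        refine ⟨m+1, hb2, Or.inl ⟨?_, ?_⟩⟩
        · rw [sra, srw]; exact addrLt_shift_of (by rw [ha0, hw0]) hw1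
        · rw [srb, srw]; exact addrLt_shift_of (by rw [hw0, hb0]) hw2

lemma push (hn : 2 ≤ n) (hs : IsIntermediate s n)
    {r r' : Addr} (hr : InSDot r) (hr' : InSDot r') (heq : itin s r = itin s r')
    {p m : ℕ} (hm : m + 2 ≤ n)
    (hsb : sb (shiftIter s m) (shiftIter r p) (shiftIter r' p)) :
    ∃ m', m' + 2 ≤ n ∧ sb (shiftIter s m') (shiftIter r (p+1)) (shiftIter r' (p+1)) := by
  rcases hsb with ⟨h1, h2⟩ | ⟨h1, h2⟩
  · exact push_core hn hs hr hr' heq hm h1 h2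
  · obtain ⟨m', hm', hsb'⟩ := push_core hn hs hr' hr heq.symm hm h1 h2
    exact ⟨m', hm', Or.symm hsb'⟩

lemma push_many (hn : 2 ≤ n) (hs : IsIntermediate s n)
    {r r' : Addr} (hr : InSDot r) (hr' : InSDot r') (heq : itin s r = itin s r') :
    ∀ q {p m : ℕ}, m + 2 ≤ n →
      sb (shiftIter s m) (shiftIter r p) (shiftIter r' p) →
      ∃ m', m' + 2 ≤ n ∧ sb (shiftIter s m') (shiftIter r (p+q)) (shiftIter r' (p+q)) := by
  intro q
  induction q with
  | zero => intro p m hm hsb; exact ⟨m, hm, hsb⟩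
  | succ q ihq =>
    intro p m hm hsb
    obtain ⟨m1, hm1, hsb1⟩ := push hn hs hr hr' heq hm hsb
    obtain ⟨m2, hm2, hsb2⟩ := ihq hm1 hsb1
    rw [(by omega : p+1+q = p+(q+1))] at hsb2
    exact ⟨m2, hm2, hsb2⟩

lemma inj_seed (hn : 2 ≤ n) (hs : IsIntermediate s n)
    {r r' : Addr} (hr : InSDot r) (hr' : InSDot r') (heq : itin s r = itin s r')
    {d : ℕ} (hd : r d ≠ r' d) :
    ∃ m', m' + 2 ≤ n ∧ sb (shiftIter s m') (shiftIter r (d+1)) (shiftIter r' (d+1)) := by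
  have e0r : shiftIter r d 0 = r d := congrArg r (Nat.zero_add d)
  have e0r' : shiftIter r' d 0 = r' d := congrArg r' (Nat.zero_add d)
  have sra : shiftIter r (d+1) = shiftIter (shiftIter r d) 1 := shiftIter_succ r d
  have srb : shiftIter r' (d+1) = shiftIter (shiftIter r' d) 1 := shiftIter_succ r' d
  cases he : itin s r d with
  | star =>
    exfalso
    have he' : itin s r' d = ItinEntry.star := by rw [← congrFun heq d]; exact he
    have h1 := itin_star_elim hr he
    have h2 := itin_star_elim hr' he'
    apply hd
    rw [← e0r, ← e0r', h1, h2]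
  | bdy j =>
    exfalso
    have he' : itin s r' d = ItinEntry.bdy j := by rw [← congrFun heq d]; exact he
    have h1 := itin_bdy_elim he
    have h2 := itin_bdy_elim he'
    apply hd
    rw [← e0r, ← e0r', h1, h2]
  | int j =>
    have he' : itin s r' d = ItinEntry.int j := by rw [← congrFun heq d]; exact he
    have hja : sect s j (shiftIter r d) := itin_int_elim he
    have hjb : sect s j (shiftIter r' d) := itin_int_elim he'
    have hA : InSDot (shiftIter r d) := InSDot_shiftIter hr d (sect_ne_top hja)
    have hB : InSDot (shiftIter r' d) := InSDot_shiftIter hr' d (sect_ne_top hjb)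
    rcases class_of_sect hA hja with ⟨ha0, has, haS⟩ | ⟨ha0, hat⟩ | ⟨ha0, has, haS⟩ <;>
      rcases class_of_sect hB hjb with ⟨hb0, hbs, hbS⟩ | ⟨hb0, hbt⟩ | ⟨hb0, hbs, hbS⟩
    -- (A,A)
    · exact absurd (by rw [← e0r, ← e0r', ha0, hb0]) hd
    -- (A,B)
    · exfalso
      have hstar : itin s r' (d+1) = ItinEntry.star := itin_star_of_top (by rw [srb]; exact hbt)
      have hstar' : itin s r (d+1) = ItinEntry.star := by rw [congrFun heq (d+1)]; exact hstar
      have h3 := itin_star_elim hr hstar'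
      rw [sra] at h3
      exact InSDot_not_top haS h3
    -- (A,C)
    · refine ⟨0, by omega, ?_⟩
      rw [shiftIter_zero, sra, srb]
      exact Or.inr ⟨hbs, has⟩
    -- (B,A)
    · exfalso
      have hstar' : itin s r (d+1) = ItinEntry.star := itin_star_of_top (by rw [sra]; exact hat)
      have hstar : itin s r' (d+1) = ItinEntry.star := by rw [← congrFun heq (d+1)]; exact hstar'
      have h3 := itin_star_elim hr' hstar
      rw [srb] at h3
      exact InSDot_not_top hbS h3
    -- (B,B)
    · exact absurd (by rw [← e0r, ← e0r', ha0, hb0]) hd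
    -- (B,C)
    · exfalso
      have hstar' : itin s r (d+1) = ItinEntry.star := itin_star_of_top (by rw [sra]; exact hat)
      have hstar : itin s r' (d+1) = ItinEntry.star := by rw [← congrFun heq (d+1)]; exact hstar'
      have h3 := itin_star_elim hr' hstar
      rw [srb] at h3
      exact InSDot_not_top hbS h3
    -- (C,A)
    · refine ⟨0, by omega, ?_⟩
      rw [shiftIter_zero, sra, srb]
      exact Or.inl ⟨has, hbs⟩
    -- (C,B)
    · exfalso
      have hstar : itin s r' (d+1) = ItinEntry.star := itin_star_of_top (by rw [srb]; exact hbt)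
      have hstar' : itin s r (d+1) = ItinEntry.star := by rw [congrFun heq (d+1)]; exact hstar
      have h3 := itin_star_elim hr hstar'
      rw [sra] at h3
      exact InSDot_not_top haS h3
    -- (C,C)
    · exact absurd (by rw [← e0r, ← e0r', ha0, hb0]) hd

lemma inj_aux (hn : 2 ≤ n) (hs : IsIntermediate s n) (hK : itin s s = finWord u n)
    (hlt1 : addrLt sm s) (hlt2 : addrLt s sp)
    (hout : ∀ j, 1 ≤ j → j ≤ n - 2 →
      ¬(addrLe sm (shiftIter s j) ∧ addrLe (shiftIter s j) sp))
    (hI : I = {a | addrLe sm a ∧ addrLe a s} ∨ I = {a | addrLe s a ∧ addrLe a sp}) :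
    ∀ d : ℕ, ∀ r r' : Addr, InSDot r → InSDot r' → OrbOK s u n I r → OrbOK s u n I r' →
      itin s r = itin s r' → r d ≠ r' d → (∀ i, i < d → r i = r' i) → False := by
  intro d
  induction d using Nat.strong_induction_on with
  | _ d IH =>
    intro r r' hr hr' ho ho' heq hd hdmin
    have hsync : ∀ k, shiftIter r k = topAddr → shiftIter r' k = topAddr := fun k h =>
      itin_star_elim hr' (by rw [← congrFun heq k]; exact itin_star_of_top h)
    have hsync' : ∀ k, shiftIter r' k = topAddr → shiftIter r k = topAddr := fun k h =>
      itin_star_elim hr (by rw [congrFun heq k]; exact itin_star_of_top h)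
    have hkill : ∀ k, k ≤ d → shiftIter r k = topAddr → shiftIter r' k = topAddr → False := by
      intro k hk h1 h2
      apply hd
      have hr_d : r d = ⊤ := by
        have := congrFun h1 (d - k)
        rwa [shiftIter_apply, (by omega : d - k + k = d)] at this
      have hr'_d : r' d = ⊤ := by
        have := congrFun h2 (d - k)
        rwa [shiftIter_apply, (by omega : d - k + k = d)] at this
      rw [hr_d, hr'_d]
    rcases Nat.lt_or_ge d n with hdn | hdn
    · -- d < n : run the straddle argument up to position n
      obtain ⟨m0, hm0, hsb0⟩ := inj_seed hn hs hr hr' heq hd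
      have hchain : ∀ q, ∃ m', m' + 2 ≤ n ∧
          sb (shiftIter s m') (shiftIter r (d+1+q)) (shiftIter r' (d+1+q)) :=
        fun q => push_many hn hs hr hr' heq q hm0 hsb0
      have hDefBoth : ∀ k, k < n → shiftIter r k ≠ topAddr ∧ shiftIter r' k ≠ topAddr := by
        intro k hk
        have hcase : shiftIter r k = topAddr → shiftIter r' k = topAddr → False := by
          intro h1 h2
          rcases Nat.lt_or_ge d k with h | h
          · obtain ⟨m', hm', hsb⟩ := hchain (k - d - 1)
            rw [(by omega : d+1+(k-d-1) = k)] at hsb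
            rw [h1, h2] at hsb
            rcases hsb with ⟨hx, hy⟩ | ⟨hx, hy⟩ <;> exact not_addrLt_top _ hx
          · exact hkill k h h1 h2
        constructor
        · intro h1; exact hcase h1 (hsync k h1)
        · intro h2; exact hcase (hsync' k h2) h2
      have hDef : shiftDef r n := fun k hk => (hDefBoth k hk).1
      have hDef' : shiftDef r' n := fun k hk => (hDefBoth k hk).2
      have hmem : shiftIter r n ∈ I := by
        have := (ho 1 (by rw [Nat.one_mul]; exact hDef)).1
        rwa [Nat.one_mul] at this
      have hmem' : shiftIter r' n ∈ I := by
        have := (ho' 1 (by rw [Nat.one_mul]; exact hDef')).1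
        rwa [Nat.one_mul] at this
      obtain ⟨m', hm', hsb⟩ := hchain (n - d - 1)
      rw [(by omega : d+1+(n-d-1) = n)] at hsb
      have hxy : ∀ x y : Addr, x ∈ I → y ∈ I →
          addrLt x (shiftIter s m') → addrLt (shiftIter s m') y → False := by
        intro x y hx hy h1 h2
        rcases Nat.eq_zero_or_pos m' with rfl | hm'pos
        · rw [shiftIter_zero] at h1 h2
          exact not_between_sI hI hx hy h1 h2
        · refine hout m' hm'pos (by omega) ⟨?_, ?_⟩
          · exact addrLe_trans (I_mem_le hlt1 hlt2 hI hx).1 (Or.inl h1)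
          · exact addrLe_trans (Or.inl h2) (I_mem_le hlt1 hlt2 hI hy).2
      rcases hsb with ⟨h1, h2⟩ | ⟨h1, h2⟩
      · exact hxy _ _ hmem hmem' h1 h2
      · exact hxy _ _ hmem' hmem h1 h2
    · -- d ≥ n : recurse one period later
      have hDef : shiftDef r n := fun k hk h1 => hkill k (by omega) h1 (hsync k h1)
      have hDef' : shiftDef r' n := fun k hk h2 => hkill k (by omega) (hsync' k h2) h2
      have e1 : shiftIter r n (d - n) = r d := by
        rw [shiftIter_apply, (by omega : d - n + n = d)]
      have e1' : shiftIter r' n (d - n) = r' d := by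
        rw [shiftIter_apply, (by omega : d - n + n = d)]
      refine IH (d - n) (by omega) (shiftIter r n) (shiftIter r' n)
        (InSDot_shiftIter hr n (fun h => hkill n (by omega) h (hsync n h)))
        (InSDot_shiftIter hr' n (fun h => hkill n (by omega) (hsync' n h) h))
        (orb_shift ho hDef) (orb_shift ho' hDef') ?_ ?_ ?_
      · funext i
        rw [itin_shift, itin_shift]
        exact congrFun heq (i+n)
      · intro hcontra
        exact hd (by rw [← e1, hcontra, e1'])
      · intro i hi
        rw [shiftIter_apply, shiftIter_apply]
        exact hdmin (i + n) (by omega)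

end Main3

end Stmt10Aux
/-- **Monotonicity of Itineraries.** Let `s` be an intermediate external
address of length `n ≥ 2` with `K(s) = u_1 … u_{n-1} *`, let `s⁻ < s < s⁺` in `Ṡ` with
`σ^j(s) ∉ [s⁻, s⁺]` for `1 ≤ j ≤ n-2`, and let `I` be `[s⁻, s]` or `[s, s⁺]`. If
`r¹, r² ∈ I ∖ {s}` are such that all defined iterates `σ^{jn}(r^ℓ)` lie in `I` and have
itinerary starting with `u_1 … u_{n-1}`, then equality of itineraries implies `r¹ = r²`,
and `itin_s(r¹) < itin_s(r²)` implies `r¹ < r²`. -/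
theorem stmt10 (n : ℕ) (hn : 2 ≤ n) (s : Addr) (hs : IsIntermediate s n)
    (u : ℕ → ℤ) (hK : itin s s = finWord u n)
    (sm sp : Addr) (hsm : InSDot sm) (hsp : InSDot sp)
    (hlt1 : addrLt sm s) (hlt2 : addrLt s sp)
    (hout : ∀ j, 1 ≤ j → j ≤ n - 2 →
      ¬(addrLe sm (shiftIter s j) ∧ addrLe (shiftIter s j) sp))
    (I : Set Addr)
    (hI : I = {a | addrLe sm a ∧ addrLe a s} ∨ I = {a | addrLe s a ∧ addrLe a sp})
    (r1 r2 : Addr) (hr1 : InSDot r1) (hr2 : InSDot r2)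
    (hr1I : r1 ∈ I) (hr2I : r2 ∈ I) (hr1s : r1 ≠ s) (hr2s : r2 ≠ s)
    (horb : ∀ r ∈ ({r1, r2} : Set Addr), ∀ j : ℕ, shiftDef r (j * n) →
      shiftIter r (j * n) ∈ I ∧
        ∀ i, i + 1 < n → itin s (shiftIter r (j * n)) i = ItinEntry.int (u i)) :
    (itin s r1 = itin s r2 → r1 = r2) ∧
    (itinLt (itin s r1) (itin s r2) → addrLt r1 r2) := by
  have hosub1 : Stmt10Aux.OrbOK s u n I r1 := fun j hj => horb r1 (by simp) j hj
  have hosub2 : Stmt10Aux.OrbOK s u n I r2 := fun j hj => horb r2 (by simp) j hj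
  constructor
  · intro heq
    by_contra hne
    have hex : ∃ i, r1 i ≠ r2 i := by
      by_contra hc; push_neg at hc; exact hne (funext hc)
    classical
    exact Stmt10Aux.inj_aux hn hs hK hlt1 hlt2 hout hI (Nat.find hex) r1 r2 hr1 hr2
      hosub1 hosub2 heq (Nat.find_spec hex)
      (fun i hi => not_not.mp (Nat.find_min hex hi))
  · intro hlt
    obtain ⟨K, hpre, hK2⟩ := hlt
    rcases Stmt10Aux.addrLt_trichotomy r1 r2 with h | h | h
    · exact h
    · exfalso
      rw [h] at hK2
      exact Stmt10Aux.entry_lt_irrefl _ hK2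
    · exfalso
      have Hp : Stmt10Aux.Hpair s u n I r2 r1 :=
        ⟨hr2, hr1, hr2I, hr1I, hr2s, hr1s, hosub2, hosub1, h⟩
      exact Stmt10Aux.ord_aux hn hs hK hsp hlt1 hlt2 hI K r2 r1 Hp
        (fun i hi => (hpre i hi).symm) hK2


end
end

section
/- The linearly ordered set Ṡ, consisting of all infinite external addresses together with all intermediate external addresses of length at least 2, equipped with the lexicographic order, is order-isomorphic to the real line ℝ; in particular, it is a densely ordered, Dedekind-complete linear order without greatest or least element. -/
noncomputable section

/-!
An address `s` is read as the real number `s₁ + τ (s₂ + τ (s₃ + ⋯))`, where `τ = arctan / π`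
(`squash` below) is an increasing `1/2`-contraction of `ℝ` onto `(-1/2, 1/2)`. An integer first entry `m` puts the value
in `(m - 1/2, m + 1/2)`, while a half-integer first entry, which is followed by `∞`, is the value
itself; since entries of `Ṡ` lie in `½ℤ`, comparing first entries and then inducting along a
common prefix shows that this evaluation is strictly monotone. Conversely a real `x` is expanded
greedily: its first entry is `x` itself if `x ∈ ℤ + 1/2` and the nearest integer `round x`
otherwise, and the rest is the expansion of `τ⁻¹ (x - round x)`. The contraction makes the
expansion evaluate back to `x`, and the expansion lies in `Ṡ` because `Ṡ` is the largest set of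
addresses that is stable under this "first entry, then the rest" decomposition.
-/

open Real Filter Topology

lemma Real.lipschitzWith_arctan : LipschitzWith 1 arctan :=
  lipschitzWith_of_nnnorm_deriv_le differentiable_arctan fun x => by
    rw [Real.deriv_arctan, ← NNReal.coe_le_coe, coe_nnnorm, Real.norm_eq_abs,
      abs_of_pos (by positivity)]
    exact div_le_one_of_le₀ (by nlinarith) (by positivity)

lemma Int.cast_ne_add_half {K : Type*} [Field K] [CharZero K] (m n : ℤ) :
    (m : K) ≠ n + 1 / 2 := by
  intro h
  have : ((2 * m : ℤ) : K) = ((2 * n + 1 : ℤ) : K) := by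
    push_cast
    rw [h]
    ring
  have := Int.cast_injective this
  omega

namespace SDot

def squash (x : ℝ) : ℝ := arctan x / π

lemma squash_zero : squash 0 = 0 := by simp [squash]

lemma squash_strictMono : StrictMono squash :=
  fun _ _ h => div_lt_div_of_pos_right (arctan_strictMono h) pi_pos

lemma squash_continuous : Continuous squash := by
  unfold squash; fun_prop

lemma abs_squash_lt (x : ℝ) : |squash x| < 1 / 2 := by
  rw [squash, abs_div, abs_of_pos pi_pos, div_lt_iff₀ pi_pos, abs_lt]
  constructor <;> linarith [arctan_lt_pi_div_two x, neg_pi_div_two_lt_arctan x]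

lemma abs_squash_sub_le (x y : ℝ) : |squash x - squash y| ≤ 1 / 2 * |x - y| := by
  have h : |arctan x - arctan y| ≤ |x - y| := by
    simpa [Real.dist_eq] using lipschitzWith_arctan.dist_le_mul x y
  rw [squash, squash, ← sub_div, abs_div, abs_of_pos pi_pos, div_le_iff₀ pi_pos]
  nlinarith [pi_gt_three, abs_nonneg (x - y)]

lemma squash_tan {y : ℝ} (hy : |y| < 1 / 2) : squash (tan (π * y)) = y := by
  rw [abs_lt] at hy
  rw [squash, arctan_tan (by nlinarith [pi_pos]) (by nlinarith [pi_pos])]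
  field_simp

/-- `∞` entries are read as `0`. The all-`∞` address then evaluates to the fixed point `0` of
`squash`, so a half-integer entry followed by `∞` evaluates to itself. -/
def evalApprox : ℕ → Addr → ℝ
  | 0, _ => 0
  | n + 1, a => (a 0).untopD 0 + squash (evalApprox n (shift a))

lemma evalApprox_succ (n : ℕ) (a : Addr) :
    evalApprox (n + 1) a = (a 0).untopD 0 + squash (evalApprox n (shift a)) := rfl

lemma dist_evalApprox_succ_le (a : Addr) (n : ℕ) :
    dist (evalApprox (n + 1) a) (evalApprox (n + 2) a) ≤ 1 / 2 * (1 / 2) ^ n := by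
  induction n generalizing a with
  | zero =>
    simpa [evalApprox, Real.dist_eq, squash_zero] using (abs_squash_lt _).le
  | succ n ih =>
    calc dist (evalApprox (n + 2) a) (evalApprox (n + 3) a)
        = |squash (evalApprox (n + 1) (shift a)) - squash (evalApprox (n + 2) (shift a))| := by
          rw [Real.dist_eq, evalApprox_succ (n + 1), evalApprox_succ (n + 2),
            add_sub_add_left_eq_sub]
      _ ≤ 1 / 2 * dist (evalApprox (n + 1) (shift a)) (evalApprox (n + 2) (shift a)) :=
          abs_squash_sub_le _ _
      _ ≤ 1 / 2 * (1 / 2 * (1 / 2) ^ n) := by gcongr; exact ih _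
      _ = 1 / 2 * (1 / 2) ^ (n + 1) := by ring

def evalAddr (a : Addr) : ℝ := limUnder atTop fun n => evalApprox n a

lemma tendsto_evalApprox (a : Addr) :
    Tendsto (fun n => evalApprox n a) atTop (𝓝 (evalAddr a)) :=
  ((cauchySeq_shift 1).1 (cauchySeq_of_le_geometric _ _ (by norm_num)
    (dist_evalApprox_succ_le a))).tendsto_limUnder

lemma evalAddr_eq (a : Addr) : evalAddr a = (a 0).untopD 0 + squash (evalAddr (shift a)) :=
  tendsto_nhds_unique ((tendsto_add_atTop_iff_nat 1).2 (tendsto_evalApprox a))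
    (((squash_continuous.tendsto _).comp (tendsto_evalApprox (shift a))).const_add _)

lemma evalAddr_topAddr : evalAddr topAddr = 0 := by
  have h : evalAddr topAddr = squash (evalAddr topAddr) :=
    (evalAddr_eq topAddr).trans (zero_add _)
  have := abs_squash_sub_le (evalAddr topAddr) 0
  rw [← h, squash_zero, sub_zero] at this
  exact abs_eq_zero.1 (by linarith [abs_nonneg (evalAddr topAddr)])

lemma abs_evalAddr_sub_lt {a : Addr} {x : ℝ} (h : a 0 = x) : |evalAddr a - x| < 1 / 2 := by
  rw [evalAddr_eq, h, WithTop.untopD_coe, add_sub_cancel_left]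
  exact abs_squash_lt _

lemma evalAddr_of_shift_eq_top {a : Addr} {x : ℝ} (h0 : a 0 = x) (h : shift a = topAddr) :
    evalAddr a = x := by
  rw [evalAddr_eq, h0, h, evalAddr_topAddr, squash_zero, WithTop.untopD_coe, add_zero]

/-- `Ṡ` is the greatest fixed point of `Step`: an integer entry may be followed by any
address of `P`, a half-integer entry only by `∞`. -/
def Step (P : Addr → Prop) (a : Addr) : Prop :=
  (∃ m : ℤ, a 0 = ((m : ℝ) : Entry) ∧ P (shift a)) ∨
    ∃ m : ℤ, a 0 = (((m : ℝ) + 1 / 2 : ℝ) : Entry) ∧ shift a = topAddr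

lemma _root_.InSDot.step {a : Addr} (ha : InSDot a) : Step InSDot a := by
  rcases ha with ha | ⟨n, hn, -, hint, hhalf, htop⟩
  · obtain ⟨m, hm⟩ := ha 0
    exact Or.inl ⟨m, hm, Or.inl fun k => ha (k + 1)⟩
  rcases hn.eq_or_lt with rfl | hn
  · obtain ⟨m, hm⟩ := hhalf 0 rfl
    exact Or.inr ⟨m, hm, funext fun k => htop (k + 1) (by omega)⟩
  · obtain ⟨m, hm⟩ := hint 0 (by omega)
    refine Or.inl ⟨m, hm, Or.inr ⟨n - 1, by omega, by omega, fun k hk => hint (k + 1) (by omega),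
      fun k hk => hhalf (k + 1) (by omega), fun k hk => htop (k + 1) (by omega)⟩⟩

lemma shiftIter_succ (a : Addr) (k : ℕ) : shiftIter a (k + 1) = shift (shiftIter a k) := by
  funext j
  simp only [shiftIter, shift, Nat.add_right_comm, Nat.add_assoc]

lemma shiftIter_apply_zero (a : Addr) (k : ℕ) : shiftIter a k 0 = a k := by
  simp only [shiftIter, Nat.zero_add]

theorem inSDot_of_forall_step {P : Addr → Prop} (hP : ∀ a, P a → Step P a) {a : Addr}
    (ha : P a) : InSDot a := by
  classical
  set IsHalfAt : ℕ → Prop := fun k => ∃ m : ℤ, a k = (((m : ℝ) + 1 / 2 : ℝ) : Entry)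
  have hP_orbit : ∀ k, (∀ j < k, ¬ IsHalfAt j) → P (shiftIter a k) := by
    intro k
    induction k with
    | zero => exact fun _ => ha
    | succ k ih =>
      intro hk
      rw [shiftIter_succ]
      rcases hP _ (ih fun j hj => hk j (by omega)) with ⟨-, -, h⟩ | ⟨m, hm, -⟩
      · exact h
      · exact absurd ⟨m, by rwa [shiftIter_apply_zero] at hm⟩ (hk k (by omega))
  have hint : ∀ k, (∀ j ≤ k, ¬ IsHalfAt j) → ∃ m : ℤ, a k = ((m : ℝ) : Entry) := by
    intro k hk
    rcases hP _ (hP_orbit k fun j hj => hk j hj.le) with ⟨m, hm, -⟩ | ⟨m, hm, -⟩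
    · exact ⟨m, by rwa [shiftIter_apply_zero] at hm⟩
    · exact absurd ⟨m, by rwa [shiftIter_apply_zero] at hm⟩ (hk k le_rfl)
  by_cases hhalf : ∃ k, IsHalfAt k
  · right
    set k := Nat.find hhalf
    have hmin : ∀ j < k, ¬ IsHalfAt j := fun j hj => Nat.find_min hhalf hj
    obtain ⟨m, hm⟩ := Nat.find_spec hhalf
    obtain ⟨m', hm', -⟩ | ⟨-, -, htop⟩ := hP _ (hP_orbit k hmin)
    · rw [shiftIter_apply_zero, hm, WithTop.coe_inj] at hm'
      exact absurd hm'.symm (Int.cast_ne_add_half m' m)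
    refine ⟨k + 2, by omega, by omega, fun j hj => hint j fun i hi => hmin i (by omega),
      fun j hj => ⟨m, by rwa [show j = k by omega]⟩, fun j hj => ?_⟩
    have := congrFun htop (j - k - 1)
    simp only [shift, shiftIter] at this
    rwa [show j - k - 1 + 1 + k = j by omega] at this
  · exact Or.inl fun k => hint k fun j _ hj => hhalf ⟨j, hj⟩

lemma evalAddr_lt_of_head_lt {a b : Addr} (ha : InSDot a) (hb : InSDot b) (h : a 0 < b 0) :
    evalAddr a < evalAddr b := by
  rcases ha.step with ⟨m, ham, -⟩ | ⟨m, ham, ha'⟩ <;>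
    rcases hb.step with ⟨n, hbn, -⟩ | ⟨n, hbn, hb'⟩ <;>
    rw [ham, hbn, WithTop.coe_lt_coe] at h
  · have hmn : (m : ℝ) + 1 ≤ n := by exact_mod_cast Int.cast_lt.1 h
    linarith [abs_lt.1 (abs_evalAddr_sub_lt ham), abs_lt.1 (abs_evalAddr_sub_lt hbn)]
  · have hmn : (m : ℝ) < n + 1 := by linarith
    replace hmn : (m : ℝ) ≤ n := by exact_mod_cast Int.lt_add_one_iff.1 (by exact_mod_cast hmn)
    rw [evalAddr_of_shift_eq_top hbn hb']
    linarith [abs_lt.1 (abs_evalAddr_sub_lt ham)]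
  · have hmn : (m : ℝ) + 1 ≤ n := by exact_mod_cast Int.cast_lt.1 (by linarith : (m : ℝ) < n)
    rw [evalAddr_of_shift_eq_top ham ha']
    linarith [abs_lt.1 (abs_evalAddr_sub_lt hbn)]
  · rwa [evalAddr_of_shift_eq_top ham ha', evalAddr_of_shift_eq_top hbn hb']

theorem evalAddr_lt_evalAddr {a b : Addr} (ha : InSDot a) (hb : InSDot b) (hab : addrLt a b) :
    evalAddr a < evalAddr b := by
  obtain ⟨k, hpre, hk⟩ := hab
  induction k generalizing a b with
  | zero => exact evalAddr_lt_of_head_lt ha hb hk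
  | succ k ih =>
    have h0 : a 0 = b 0 := hpre 0 k.succ_pos
    obtain ⟨m, ham, ha'⟩ | ⟨-, -, ha'⟩ := ha.step
    swap
    · rw [show a (k + 1) = ⊤ from congrFun ha' k] at hk
      exact absurd hk not_top_lt
    obtain ⟨-, -, hb'⟩ | ⟨n, hbn, -⟩ := hb.step
    swap
    · rw [← h0, ham, WithTop.coe_inj] at hbn
      exact absurd hbn (Int.cast_ne_add_half m n)
    rw [evalAddr_eq a, evalAddr_eq b, h0]
    have h_shift := ih ha' hb' (fun j hj => hpre (j + 1) (by omega)) hk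
    exact add_lt_add_right (squash_strictMono h_shift) _

def IsHalf (x : ℝ) : Prop := ∃ m : ℤ, x = m + 1 / 2

lemma abs_sub_round_lt {x : ℝ} (h : ¬ IsHalf x) : |x - round x| < 1 / 2 := by
  refine (abs_sub_round x).lt_of_ne fun he => h ?_
  rcases abs_eq (by norm_num : (0 : ℝ) ≤ 1 / 2) |>.1 he with he | he
  · exact ⟨round x, by linarith⟩
  · exact ⟨round x - 1, by push_cast; linarith⟩

open scoped Classical in
def nextState : WithTop ℝ → WithTop ℝ
  | ⊤ => ⊤
  | (x : ℝ) => if IsHalf x then ⊤ else ((tan (π * (x - round x)) : ℝ) : WithTop ℝ)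

open scoped Classical in
def digit : WithTop ℝ → Entry
  | ⊤ => ⊤
  | (x : ℝ) => if IsHalf x then (x : Entry) else (((round x : ℤ) : ℝ) : Entry)

def addrOf (x : ℝ) : Addr := fun k => digit (nextState^[k] x)

lemma addrOf_zero_of_isHalf {x : ℝ} (h : IsHalf x) : addrOf x 0 = x := by
  classical
  exact if_pos h

lemma addrOf_zero_of_not_isHalf {x : ℝ} (h : ¬ IsHalf x) :
    addrOf x 0 = (((round x : ℤ) : ℝ) : Entry) := by
  classical
  exact if_neg h

lemma shift_addrOf_of_isHalf {x : ℝ} (h : IsHalf x) : shift (addrOf x) = topAddr := by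
  classical
  funext k
  have hnext : nextState x = ⊤ := if_pos h
  simp only [shift, addrOf, Function.iterate_succ_apply, hnext,
    Function.iterate_fixed (show nextState ⊤ = ⊤ from rfl)]
  rfl

lemma shift_addrOf_of_not_isHalf {x : ℝ} (h : ¬ IsHalf x) :
    shift (addrOf x) = addrOf (tan (π * (x - round x))) := by
  classical
  funext k
  have hnext : nextState x = ((tan (π * (x - round x)) : ℝ) : WithTop ℝ) := if_neg h
  simp only [shift, addrOf, Function.iterate_succ_apply, hnext]

lemma inSDot_addrOf (x : ℝ) : InSDot (addrOf x) := by
  refine inSDot_of_forall_step (P := fun a => ∃ x, a = addrOf x) ?_ ⟨x, rfl⟩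
  rintro _ ⟨x, rfl⟩
  by_cases h : IsHalf x
  · obtain ⟨m, hm⟩ := id h
    exact Or.inr ⟨m, by rw [addrOf_zero_of_isHalf h, hm], shift_addrOf_of_isHalf h⟩
  · exact Or.inl ⟨round x, addrOf_zero_of_not_isHalf h, _, shift_addrOf_of_not_isHalf h⟩

lemma abs_evalAddr_addrOf_sub_le (n : ℕ) (x : ℝ) : |evalAddr (addrOf x) - x| ≤ (1 / 2) ^ n := by
  by_cases h : IsHalf x
  · rw [evalAddr_of_shift_eq_top (addrOf_zero_of_isHalf h) (shift_addrOf_of_isHalf h),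
      sub_self, abs_zero]
    positivity
  cases n with
  | zero =>
    rw [pow_zero]
    linarith [abs_evalAddr_sub_lt (addrOf_zero_of_not_isHalf h), abs_sub_round x,
      abs_sub_le (evalAddr (addrOf x)) (round x) x, abs_sub_comm (round x : ℝ) x]
  | succ n =>
    set y := tan (π * (x - round x))
    have hx : x = round x + squash y := by rw [squash_tan (abs_sub_round_lt h)]; ring
    have he : evalAddr (addrOf x) = round x + squash (evalAddr (addrOf y)) := by
      rw [evalAddr_eq, addrOf_zero_of_not_isHalf h, shift_addrOf_of_not_isHalf h,
        WithTop.untopD_coe]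
    calc |evalAddr (addrOf x) - x| = |squash (evalAddr (addrOf y)) - squash y| := by
          rw [he]; congr 1; linarith
      _ ≤ 1 / 2 * |evalAddr (addrOf y) - y| := abs_squash_sub_le _ _
      _ ≤ 1 / 2 * (1 / 2) ^ n := by gcongr; exact abs_evalAddr_addrOf_sub_le n y
      _ = (1 / 2) ^ (n + 1) := by ring

lemma evalAddr_addrOf (x : ℝ) : evalAddr (addrOf x) = x := by
  have h := ge_of_tendsto' (tendsto_pow_atTop_nhds_zero_of_lt_one (r := (1 / 2 : ℝ))
    (by norm_num) (by norm_num)) fun n => abs_evalAddr_addrOf_sub_le n x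
  exact sub_eq_zero.1 (abs_nonpos_iff.1 h)

-- `addrLt` is definitionally the order of `Lex (ℕ → Entry)`.
instance : Std.Trichotomous addrLt :=
  InvImage.trichotomous (r := ((· < ·) : Lex (ℕ → Entry) → _ → Prop)) toLex.injective

end SDot

/-- The linearly ordered set `Ṡ` with the lexicographic order is
order-isomorphic to the real line `ℝ`. -/
theorem stmt13 :
    Nonempty
      (RelIso (fun a b : {x : Addr // InSDot x} => addrLt a.1 b.1)
        ((· < ·) : ℝ → ℝ → Prop)) := by
  have : Std.Trichotomous (fun a b : {x : Addr // InSDot x} => addrLt a.1 b.1) :=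
    InvImage.trichotomous (r := addrLt) Subtype.val_injective
  refine ⟨RelIso.ofSurjective (RelEmbedding.ofMonotone (fun a => SDot.evalAddr a.1)
    fun a b => SDot.evalAddr_lt_evalAddr a.2 b.2) fun x => ?_⟩
  exact ⟨⟨SDot.addrOf x, SDot.inSDot_addrOf x⟩, SDot.evalAddr_addrOf x⟩

end
end

section
/- Let n ≥ 1 and let W be a connected component of the set of all parameters κ ∈ ℂ for which E_κ has an attracting periodic point. Assume that every κ ∈ W has an attracting periodic point z with E_κ^n(z) = z. Then for every κ₀ in the boundary of W (taken in ℂ) there exists z₀ ∈ ℂ with E_{κ₀}^n(z₀) = z₀ and |(E_{κ₀}^n)′(z₀)| = 1; that is, every finite boundary point of W is an indifferent parameter of period dividing n. -/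
/-!
Attracting `n`-cycles of `E_κ` persist under perturbation of `κ` (the iterate is a contraction
near the cycle), so the parameters with an attracting cycle of period dividing `n` form an open
set. Conversely, a point of an `n`-cycle with multiplier of modulus `≤ 1` is bounded in terms of
`|κ|`: the multiplier is `exp` of the sum of the orbit, so some orbit point has non-positive real
part and its image has modulus `≤ 1 + |κ|`. Hence, by compactness, the parameters with such a
non-repelling cycle form a closed set. A boundary point `κ₀` of `W` therefore has a non-repelling
`n`-cycle. If that cycle were attracting, a whole disc around `κ₀` would consist of parameters
with an attracting cycle; since the disc meets `W`, it would lie in the component `W`,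
contradicting `κ₀ ∈ frontier W`.
-/

open Complex Metric Filter Topology
open scoped NNReal

theorem IsOpen.subset_connectedComponentIn_of_inter_closure_nonempty {X : Type*}
    [TopologicalSpace X] {U H : Set X} {x : X} (hUo : IsOpen U) (hU : IsPreconnected U)
    (hUH : U ⊆ H) (hmeet : (U ∩ closure (connectedComponentIn H x)).Nonempty) :
    U ⊆ connectedComponentIn H x := by
  obtain ⟨p, hpU, hpW⟩ := hmeet
  obtain ⟨q, hqU, hqW⟩ := _root_.mem_closure_iff.1 hpW U hUo hpU
  rw [connectedComponentIn_eq hqW]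
  exact hU.subset_connectedComponentIn hqU hUH

theorem LipschitzOnWith.exists_fixedPoint_mem_closedBall {α : Type*} [MetricSpace α]
    [CompleteSpace α] {f : α → α} {K : ℝ≥0} {x : α} {r : ℝ}
    (hf : LipschitzOnWith K f (closedBall x r)) (hK : K < 1)
    (hx : dist (f x) x ≤ (1 - K) * r) : ∃ z ∈ closedBall x r, f z = z := by
  have hK' : (K : ℝ) < 1 := hK
  have hr : 0 ≤ r := nonneg_of_mul_nonneg_right (dist_nonneg.trans hx) (by linarith)
  have hmaps : Set.MapsTo f (closedBall x r) (closedBall x r) := fun y hy => by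
    have hfy : dist (f y) (f x) ≤ K * dist y x := hf.dist_le_mul y hy x (mem_closedBall_self hr)
    have hy' : dist y x ≤ r := hy
    rw [mem_closedBall]
    nlinarith [dist_triangle (f y) (f x) x, K.coe_nonneg]
  obtain ⟨z, hz, hfix, -⟩ := ContractingWith.exists_fixedPoint' isClosed_closedBall.isComplete
    hmaps ⟨hK, hf.mapsToRestrict hmaps⟩ (mem_closedBall_self hr) (edist_ne_top _ _)
  exact ⟨z, hz, hfix⟩

noncomputable def expMap (κ w : ℂ) : ℂ := exp w + κ

def attractingParams (n : ℕ) : Set ℂ :=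
  {κ | ∃ z, (expMap κ)^[n] z = z ∧ ‖deriv ((expMap κ)^[n]) z‖ < 1}

def nonrepellingParams (n : ℕ) : Set ℂ :=
  {κ | ∃ z, (expMap κ)^[n] z = z ∧ ‖deriv ((expMap κ)^[n]) z‖ ≤ 1}

theorem attractingParams_subset_nonrepellingParams (n : ℕ) :
    attractingParams n ⊆ nonrepellingParams n :=
  fun _ ⟨z, hfix, hlt⟩ => ⟨z, hfix, hlt.le⟩

namespace expMap

theorem differentiable (κ : ℂ) : Differentiable ℂ (expMap κ) :=
  differentiable_exp.add_const κ

theorem deriv_iterate (κ : ℂ) (m : ℕ) (z : ℂ) :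
    deriv ((expMap κ)^[m]) z = exp (∑ i ∈ Finset.range m, (expMap κ)^[i] z) := by
  induction m with
  | zero => simp
  | succ m ih =>
    have hderiv : deriv (expMap κ) = exp :=
      funext fun w => ((hasDerivAt_exp w).add_const κ).deriv
    rw [Function.iterate_succ', deriv_comp _ ((differentiable κ) _)
      (((differentiable κ).iterate m) _), hderiv, ih, Finset.sum_range_succ, exp_add, mul_comm]

theorem continuous_iterate_uncurry (m : ℕ) :
    Continuous fun p : ℂ × ℂ => (expMap p.1)^[m] p.2 := by
  induction m with
  | zero => exact continuous_snd
  | succ m ih =>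
    simp only [Function.iterate_succ_apply']
    exact (continuous_exp.comp ih).add continuous_fst

theorem continuous_deriv_iterate_uncurry (m : ℕ) :
    Continuous fun p : ℂ × ℂ => deriv ((expMap p.1)^[m]) p.2 := by
  simp only [deriv_iterate]
  exact continuous_exp.comp (continuous_finsetSum _ fun i _ => continuous_iterate_uncurry i)

theorem norm_iterate_le {κ : ℂ} {C : ℝ} (hκ : ‖κ‖ ≤ C) (w : ℂ) (k : ℕ) :
    ‖(expMap κ)^[k] w‖ ≤ (fun t => Real.exp t + C)^[k] ‖w‖ := by
  induction k generalizing w with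
  | zero => simp
  | succ k ih =>
    rw [Function.iterate_succ_apply, Function.iterate_succ_apply]
    refine (ih _).trans (Monotone.iterate (fun a b hab => ?_) k ?_)
    · simpa using Real.exp_le_exp.2 hab
    · calc ‖expMap κ w‖ ≤ ‖exp w‖ + ‖κ‖ := norm_add_le _ _
        _ ≤ Real.exp ‖w‖ + C := by
          rw [norm_exp]
          exact add_le_add (Real.exp_le_exp.2 (re_le_norm w)) hκ

theorem exists_re_nonpos_of_norm_deriv_iterate_le_one {n : ℕ} (hn : 1 ≤ n) {κ z : ℂ}
    (hmult : ‖deriv ((expMap κ)^[n]) z‖ ≤ 1) : ∃ i < n, ((expMap κ)^[i] z).re ≤ 0 := by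
  rw [deriv_iterate, norm_exp, Real.exp_le_one_iff, re_sum] at hmult
  by_contra! hpos
  exact hmult.not_gt (Finset.sum_pos (fun i hi => hpos i (Finset.mem_range.1 hi))
    ⟨0, Finset.mem_range.2 hn⟩)

theorem norm_le_of_re_nonpos {κ w : ℂ} {C : ℝ} (hκ : ‖κ‖ ≤ C) (hw : w.re ≤ 0) :
    ‖expMap κ w‖ ≤ 1 + C :=
  calc ‖expMap κ w‖ ≤ ‖exp w‖ + ‖κ‖ := norm_add_le _ _
    _ ≤ 1 + C := by
      rw [norm_exp]
      exact add_le_add (Real.exp_le_one_iff.2 hw) hκ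

theorem norm_le_of_isPeriodicPt {n : ℕ} (hn : 1 ≤ n) {κ z : ℂ} {C : ℝ} (hκ : ‖κ‖ ≤ C)
    (hfix : (expMap κ)^[n] z = z) (hmult : ‖deriv ((expMap κ)^[n]) z‖ ≤ 1) :
    ‖z‖ ≤ (fun t => Real.exp t + C)^[n] (1 + C) := by
  set g : ℝ → ℝ := fun t => Real.exp t + C
  have hg : Monotone g := fun a b hab => by simpa [g] using Real.exp_le_exp.2 hab
  have hC : 0 ≤ C := (norm_nonneg κ).trans hκ
  obtain ⟨i, hi, hre⟩ := exists_re_nonpos_of_norm_deriv_iterate_le_one hn hmult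
  have hback : (expMap κ)^[n - (i + 1)] ((expMap κ)^[i + 1] z) = z := by
    rw [← Function.iterate_add_apply, Nat.sub_add_cancel hi, hfix]
  have hsmall : ‖(expMap κ)^[i + 1] z‖ ≤ 1 + C := by
    rw [Function.iterate_succ_apply']
    exact norm_le_of_re_nonpos hκ hre
  calc ‖z‖ = ‖(expMap κ)^[n - (i + 1)] ((expMap κ)^[i + 1] z)‖ := by rw [hback]
    _ ≤ g^[n - (i + 1)] ‖(expMap κ)^[i + 1] z‖ := norm_iterate_le hκ _ _
    _ ≤ g^[n - (i + 1)] (1 + C) := hg.iterate _ hsmall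
    _ ≤ g^[n] (1 + C) :=
      hg.monotone_iterate_of_le_map (by simp only [g]; linarith [Real.add_one_le_exp (1 + C)])
        (Nat.sub_le n (i + 1))

end expMap

open expMap

theorem isClosed_nonrepellingParams {n : ℕ} (hn : 1 ≤ n) : IsClosed (nonrepellingParams n) := by
  refine isSeqClosed_iff_isClosed.1 fun κ κ₀ hκ hlim => ?_
  choose z hz using hκ
  obtain ⟨C, hC⟩ := isBounded_iff_forall_norm_le.1 (isBounded_range_of_tendsto κ hlim)
  have hzB : ∀ j, z j ∈ closedBall 0 ((fun t => Real.exp t + C)^[n] (1 + C)) := fun j =>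
    mem_closedBall_zero_iff.2 (norm_le_of_isPeriodicPt hn (hC _ ⟨j, rfl⟩) (hz j).1 (hz j).2)
  obtain ⟨z₀, -, φ, hφ, hzlim⟩ := (isCompact_closedBall _ _).tendsto_subseq hzB
  have hclosed : IsClosed {p : ℂ × ℂ | (expMap p.1)^[n] p.2 = p.2 ∧
      ‖deriv ((expMap p.1)^[n]) p.2‖ ≤ 1} :=
    (isClosed_eq (continuous_iterate_uncurry n) continuous_snd).inter
      (isClosed_le (continuous_deriv_iterate_uncurry n).norm continuous_const)
  exact ⟨z₀, hclosed.mem_of_tendsto ((hlim.comp hφ.tendsto_atTop).prodMk_nhds hzlim)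
    (Eventually.of_forall fun j => hz (φ j))⟩

theorem isOpen_attractingParams (n : ℕ) : IsOpen (attractingParams n) := by
  refine isOpen_iff_mem_nhds.2 ?_
  rintro κ₀ ⟨z₀, hfix, hlt⟩
  obtain ⟨K, hK, hK1⟩ : ∃ K : ℝ≥0, ‖deriv ((expMap κ₀)^[n]) z₀‖₊ < K ∧ K < 1 :=
    exists_between (by rw [← NNReal.coe_lt_coe]; exact hlt)
  have hderiv_near : ∀ᶠ p in 𝓝 (κ₀, z₀), ‖deriv ((expMap p.1)^[n]) p.2‖₊ < K :=
    (continuous_deriv_iterate_uncurry n).nnnorm.continuousAt.eventually (gt_mem_nhds hK)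
  obtain ⟨r, hr, hderiv⟩ := nhds_basis_closedBall.eventually_iff.1 hderiv_near
  have hK' : (0 : ℝ) < (1 - K) * r := mul_pos (sub_pos.2 (by exact_mod_cast hK1)) hr
  have hnear : Tendsto (fun κ => (expMap κ)^[n] z₀) (𝓝 κ₀) (𝓝 z₀) := by
    have h := ((continuous_iterate_uncurry n).comp
      (continuous_id.prodMk (continuous_const (y := z₀)))).tendsto κ₀
    simpa only [Function.comp_def, id, hfix] using h
  filter_upwards [hnear (closedBall_mem_nhds z₀ hK'), closedBall_mem_nhds κ₀ hr] with κ hκ hκr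
  have hbound : ∀ z ∈ closedBall z₀ r, ‖deriv ((expMap κ)^[n]) z‖₊ < K := fun z hz =>
    hderiv (x := (κ, z)) (by rw [← closedBall_prod_same]; exact ⟨hκr, hz⟩)
  have hlip : LipschitzOnWith K ((expMap κ)^[n]) (closedBall z₀ r) :=
    (convex_closedBall z₀ r).lipschitzOnWith_of_nnnorm_deriv_le
      (fun z _ => ((differentiable κ).iterate n) z) fun z hz => (hbound z hz).le
  obtain ⟨z, hz, hzfix⟩ := hlip.exists_fixedPoint_mem_closedBall hK1 hκ
  exact ⟨z, hzfix, (NNReal.coe_lt_coe.2 ((hbound z hz).trans hK1)).trans_eq NNReal.coe_one⟩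

/-- Let `n ≥ 1` and let `W` be a connected component of the set of
parameters `κ ∈ ℂ` for which `E_κ(z) = exp(z) + κ` has an attracting periodic point.
If every `κ ∈ W` has an attracting periodic point `z` with `E_κ^n(z) = z`, then every
`κ₀` in the boundary of `W` (taken in `ℂ`) has a periodic point `z₀` with
`E_{κ₀}^n(z₀) = z₀` whose multiplier has modulus `1`; i.e. every finite boundary point of
`W` is an indifferent parameter of period dividing `n`. -/
theorem stmt15 (n : ℕ) (hn : 1 ≤ n)
    (H : Set ℂ)
    (hH : H = {κ : ℂ | ∃ m : ℕ, 1 ≤ m ∧ ∃ z : ℂ,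
      (fun w => Complex.exp w + κ)^[m] z = z ∧
      ‖deriv ((fun w => Complex.exp w + κ)^[m]) z‖ < 1})
    (W : Set ℂ) (hW : ∃ κ ∈ H, W = connectedComponentIn H κ)
    (hattr : ∀ κ ∈ W, ∃ z : ℂ, (fun w => Complex.exp w + κ)^[n] z = z ∧
      ‖deriv ((fun w => Complex.exp w + κ)^[n]) z‖ < 1)
    (κ₀ : ℂ) (hκ₀ : κ₀ ∈ frontier W) :
    ∃ z₀ : ℂ, (fun w => Complex.exp w + κ₀)^[n] z₀ = z₀ ∧
      ‖deriv ((fun w => Complex.exp w + κ₀)^[n]) z₀‖ = 1 := by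
  obtain ⟨κ₁, -, rfl⟩ := hW
  have hWA : connectedComponentIn H κ₁ ⊆ attractingParams n := hattr
  have hAH : attractingParams n ⊆ H := by
    rintro κ ⟨z, hz⟩
    rw [hH]
    exact ⟨n, hn, z, hz⟩
  obtain ⟨z₀, hfix, hle⟩ : κ₀ ∈ nonrepellingParams n :=
    closure_minimal (hWA.trans (attractingParams_subset_nonrepellingParams n))
      (isClosed_nonrepellingParams hn) hκ₀.1
  refine ⟨z₀, hfix, hle.antisymm (not_lt.1 fun hlt => hκ₀.2 ?_)⟩
  obtain ⟨δ, hδ, hball⟩ := Metric.isOpen_iff.1 (isOpen_attractingParams n) κ₀ ⟨z₀, hfix, hlt⟩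
  refine mem_interior.2 ⟨ball κ₀ δ, ?_, isOpen_ball, mem_ball_self hδ⟩
  exact isOpen_ball.subset_connectedComponentIn_of_inter_closure_nonempty
    (convex_ball κ₀ δ).isPreconnected (hball.trans hAH) ⟨κ₀, mem_ball_self hδ, hκ₀.1⟩
end
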